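/- arXiv:1206.0309 — 4 statements merged into one kernel-verified Lean document; each statement's English description precedes it below -/
import Mathlib

section
/- Let G be an abelian group and let L = ⊕_{α∈G} L_α be a G-graded Lie algebra over a field F which is finitely generated as a Lie algebra, and let N ≥ 2 be an integer. Then the Lie algebra Der^(N)(L) of all N-derivations of L decomposes as the internal direct sum Der^(N)(L) = ⊕_{α∈G} Der^(N)_α(L), where Der^(N)_α(L) is the subspace of N-derivations of homogeneous degree α. In particular, every N-derivation of L is a sum of finitely many N-derivations of homogeneous degree. -/
open scoped BigOperators DirectSum Classical

/-- Right-iterated Lie bracket `[x₁, x₂, …, xₖ] = [x₁, [x₂, [… [x_{k-1}, xₖ] …]]]`. -/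
def itBracket {L : Type*} [LieRing L] : List L → L
  | [] => 0
  | [a] => a
  | a :: b :: l => ⁅a, itBracket (b :: l)⁆

lemma itBracket_cons {L : Type*} [LieRing L] (a : L) (l : List L) (hl : l ≠ []) :
    itBracket (a :: l) = ⁅a, itBracket l⁆ := by
  cases l with
  | nil => simp at hl
  | cons b t => rfl

noncomputable def brkML (F : Type*) {L : Type*} [Field F] [LieRing L] [LieAlgebra F L] :
    (n : ℕ) → MultilinearMap F (fun _ : Fin (n+1) => L) L
  | 0 => (MultilinearMap.ofSubsingleton F L L (0 : Fin 1) LinearMap.id : MultilinearMap F (fun _ : Fin 1 => L) L)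
  | (n+1) => LinearMap.uncurryLeft
      { toFun := fun a => (LieAlgebra.ad F L a).compMultilinearMap (brkML F n)
        map_add' := by intros; ext; simp [add_lie]
        map_smul' := by intros; ext; simp [smul_lie] }

lemma brkML_apply (F : Type*) {L : Type*} [Field F] [LieRing L] [LieAlgebra F L] :
    ∀ (n : ℕ) (x : Fin (n+1) → L), brkML F n x = itBracket (List.ofFn x)
  | 0, x => by
      simp only [List.ofFn_succ, List.ofFn_zero]
      rfl
  | (n+1), x => by
      rw [List.ofFn_succ, itBracket_cons _ _ (by simp [← List.length_pos_iff]),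
        ← brkML_apply F n]
      rfl

/-- `φ` is an `N`-derivation of the Lie algebra `L`:
`φ [x₁, …, x_N] = ∑ i, [x₁, …, x_{i-1}, φ xᵢ, x_{i+1}, …, x_N]`. -/
def IsNDeriv (F : Type*) {L : Type*} [CommRing F] [LieRing L] [LieAlgebra F L]
    (N : ℕ) (φ : L →ₗ[F] L) : Prop :=
  ∀ x : Fin N → L,
    φ (itBracket (List.ofFn x)) =
      ∑ i : Fin N, itBracket (List.ofFn (Function.update x i (φ (x i))))

/-- `φ` has homogeneous degree `α` with respect to the grading `𝒜`, i.e. `φ (𝒜 β) ⊆ 𝒜 (α + β)`. -/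
def IsHomogOfDeg {G F L : Type*} [AddCommGroup G] [CommRing F] [LieRing L] [LieAlgebra F L]
    (𝒜 : G → Submodule F L) (α : G) (φ : L →ₗ[F] L) : Prop :=
  ∀ β : G, ∀ x ∈ 𝒜 β, φ x ∈ 𝒜 (α + β)


set_option linter.unusedSectionVars false

section Graded
variable {G F L : Type*} [AddCommGroup G] [Field F] [LieRing L] [LieAlgebra F L]
variable (𝒜 : G → Submodule F L) [DirectSum.Decomposition 𝒜]

/-- projection onto degree `δ` component -/
noncomputable def projG (δ : G) : L →ₗ[F] L :=
  (𝒜 δ).subtype ∘ₗ (DirectSum.component F G (fun i => 𝒜 i) δ) ∘ₗ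
    (DirectSum.decomposeLinearEquiv 𝒜).toLinearMap

lemma projG_apply (δ : G) (x : L) : projG 𝒜 δ x = (DirectSum.decompose 𝒜 x δ : L) := rfl

lemma projG_mem (δ : G) (x : L) : projG 𝒜 δ x ∈ 𝒜 δ := (DirectSum.decompose 𝒜 x δ).2

lemma projG_of_mem_same {δ : G} {x : L} (hx : x ∈ 𝒜 δ) : projG 𝒜 δ x = x :=
  DirectSum.decompose_of_mem_same 𝒜 hx

lemma projG_of_mem_ne {β δ : G} {x : L} (hx : x ∈ 𝒜 β) (h : β ≠ δ) : projG 𝒜 δ x = 0 :=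
  DirectSum.decompose_of_mem_ne 𝒜 hx h

lemma sum_projG (x : L) :
    ∑ δ ∈ (DirectSum.decompose 𝒜 x).support, projG 𝒜 δ x = x :=
  DirectSum.sum_support_decompose 𝒜 x

lemma projG_eq_zero_of_not_mem_support {x : L} {δ : G}
    (h : δ ∉ (DirectSum.decompose 𝒜 x).support) : projG 𝒜 δ x = 0 := by
  rw [projG_apply, DFinsupp.notMem_support_iff.mp h]
  rfl

/-- linear maps agreeing on homogeneous elements agree -/
lemma ext_homog {f g : L →ₗ[F] L} (h : ∀ β : G, ∀ x ∈ 𝒜 β, f x = g x) : f = g := by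
  ext x
  induction x using DirectSum.Decomposition.inductionOn 𝒜 with
  | zero => simp
  | homogeneous m => exact h _ m m.2
  | add x y hx hy => rw [map_add, map_add, hx, hy]

/-- the degree-`γ` component of a linear map `φ` -/
noncomputable def cmpG (φ : L →ₗ[F] L) (γ : G) : L →ₗ[F] L :=
  (DirectSum.toModule F G L (fun β => projG 𝒜 (γ + β) ∘ₗ φ ∘ₗ (𝒜 β).subtype)) ∘ₗ
    (DirectSum.decomposeLinearEquiv 𝒜).toLinearMap

lemma cmpG_of_mem {φ : L →ₗ[F] L} {γ β : G} {x : L} (hx : x ∈ 𝒜 β) :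
    cmpG 𝒜 φ γ x = projG 𝒜 (γ + β) (φ x) := by
  have : (DirectSum.decomposeLinearEquiv 𝒜) x = DirectSum.lof F G (fun i => (𝒜 i : Submodule F L)) β ⟨x, hx⟩ := by
    rw [DirectSum.decomposeLinearEquiv_apply, DirectSum.decompose_of_mem 𝒜 hx]; rfl
  rw [cmpG, LinearMap.comp_apply, LinearEquiv.coe_coe, this, DirectSum.toModule_lof]
  rfl

lemma cmpG_homog (φ : L →ₗ[F] L) (γ : G) : IsHomogOfDeg 𝒜 γ (cmpG 𝒜 φ γ) := by
  intro β x hx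
  rw [cmpG_of_mem 𝒜 hx]
  exact projG_mem 𝒜 _ _

lemma brkML_mem (hgraded : ∀ (α β : G), ∀ x ∈ 𝒜 α, ∀ y ∈ 𝒜 β, ⁅x, y⁆ ∈ 𝒜 (α + β)) :
    ∀ (n : ℕ) (x : Fin (n+1) → L) (β : Fin (n+1) → G),
      (∀ i, x i ∈ 𝒜 (β i)) → brkML F n x ∈ 𝒜 (∑ i, β i)
  | 0, x, β, h => by
      have h1 : brkML F 0 x = x 0 := rfl
      rw [h1, Fin.sum_univ_one]
      exact h 0
  | (n+1), x, β, h => by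
      have h1 : brkML F (n+1) x = ⁅x 0, brkML F n (Fin.tail x)⁆ := rfl
      rw [h1, Fin.sum_univ_succ]
      exact hgraded _ _ _ (h 0) _
        (brkML_mem hgraded n (Fin.tail x) (Fin.tail β) (fun i => h i.succ))

/-- multilinear maps agreeing on homogeneous inputs agree -/
lemma mlext {n : ℕ} {f g : MultilinearMap F (fun _ : Fin n => L) L}
    (h : ∀ (x : Fin n → L) (β : Fin n → G), (∀ i, x i ∈ 𝒜 (β i)) → f x = g x) :
    f = g := by
  have key : ∀ k : ℕ, ∀ x : Fin n → L,
      (∀ i : Fin n, k ≤ (i : ℕ) → ∃ β, x i ∈ 𝒜 β) → f x = g x := by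
    intro k
    induction k with
    | zero =>
        intro x hx
        choose β hβ using fun i => hx i (Nat.zero_le _)
        exact h x β hβ
    | succ k ih =>
        intro x hx
        by_cases hk : k < n
        · set ik : Fin n := ⟨k, hk⟩ with hik
          have hxik : x ik = ∑ δ ∈ (DirectSum.decompose 𝒜 (x ik)).support,
              projG 𝒜 δ (x ik) := (sum_projG 𝒜 (x ik)).symm
          have hfx : f x = f (Function.update x ik (x ik)) := by
            rw [Function.update_eq_self]
          have hgx : g x = g (Function.update x ik (x ik)) := by
            rw [Function.update_eq_self]
          rw [hfx, hgx, hxik, MultilinearMap.map_update_sum, MultilinearMap.map_update_sum]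
          refine Finset.sum_congr rfl (fun δ _ => ?_)
          refine ih _ (fun i hi => ?_)
          by_cases hii : i = ik
          · subst hii
            exact ⟨δ, by rw [Function.update_self]; exact projG_mem 𝒜 δ _⟩
          · rw [Function.update_of_ne hii]
            refine hx i ?_
            rcases Nat.lt_or_ge (i : ℕ) (k+1) with h' | h'
            · exact absurd (Fin.ext (Nat.le_antisymm (Nat.lt_succ_iff.mp h') hi)) hii
            · exact h'
        · refine ih x (fun i hi => absurd (lt_of_lt_of_le i.isLt (Nat.not_lt.mp hk))
            (Nat.not_lt.mpr hi))
  refine MultilinearMap.ext (fun x => key n x (fun i hi => absurd i.isLt (Nat.not_lt.mpr hi)))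

lemma gML_apply {F : Type*} {L : Type*} [Field F] [LieRing L] [LieAlgebra F L] {n : ℕ}
    (ψ : L →ₗ[F] L) (i : Fin (n+1)) (x : Fin (n+1) → L) :
    (brkML F n).compLinearMap (fun j => if j = i then ψ else LinearMap.id) x
      = brkML F n (Function.update x i (ψ (x i))) := by
  rw [MultilinearMap.compLinearMap_apply]
  congr 1
  funext j
  by_cases hj : j = i
  · subst hj; simp
  · simp [hj, Function.update_of_ne hj]

lemma cmpG_isNDeriv (hgraded : ∀ (α β : G), ∀ x ∈ 𝒜 α, ∀ y ∈ 𝒜 β, ⁅x, y⁆ ∈ 𝒜 (α + β))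
    {φ : L →ₗ[F] L} {n : ℕ} (hφ : IsNDeriv F (n+1) φ) (γ : G) :
    IsNDeriv F (n+1) (cmpG 𝒜 φ γ) := by
  set ψ := cmpG 𝒜 φ γ with hψ
  have main : ψ.compMultilinearMap (brkML F n) =
      ∑ i : Fin (n+1), (brkML F n).compLinearMap (fun j => if j = i then ψ else LinearMap.id) := by
    refine mlext 𝒜 (fun x β hx => ?_)
    have hbrk : brkML F n x ∈ 𝒜 (∑ j, β j) := brkML_mem 𝒜 hgraded n x β hx
    rw [LinearMap.compMultilinearMap_apply, MultilinearMap.sum_apply]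
    rw [hψ, cmpG_of_mem 𝒜 hbrk]
    have hφx : φ (brkML F n x) = ∑ i : Fin (n+1), brkML F n (Function.update x i (φ (x i))) := by
      rw [brkML_apply]
      rw [hφ x]
      exact Finset.sum_congr rfl (fun i _ => (brkML_apply F n _).symm)
    rw [hφx, map_sum]
    refine Finset.sum_congr rfl (fun i _ => ?_)
    rw [gML_apply, cmpG_of_mem 𝒜 (hx i)]
    -- per-i claim
    set y := φ (x i) with hy
    have hysum : y = ∑ δ ∈ (DirectSum.decompose 𝒜 y).support, projG 𝒜 δ y :=
      (sum_projG 𝒜 y).symm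
    rw [hysum, MultilinearMap.map_update_sum, map_sum, ← hysum]
    have hsplit : ∑ j : Fin (n+1), β j = β i + ∑ j ∈ Finset.univ.erase i, β j :=
      (Finset.add_sum_erase _ _ (Finset.mem_univ i)).symm
    have hterm : ∀ δ : G,
        projG 𝒜 (γ + ∑ j, β j) (brkML F n (Function.update x i (projG 𝒜 δ y)))
          = if δ = γ + β i then brkML F n (Function.update x i (projG 𝒜 δ y)) else 0 := by
      intro δ
      have hmem : brkML F n (Function.update x i (projG 𝒜 δ y))
          ∈ 𝒜 (∑ j, Function.update β i δ j) := by
        refine brkML_mem 𝒜 hgraded n _ _ (fun j => ?_)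
        by_cases hj : j = i
        · subst hj; simp only [Function.update_self]; exact projG_mem 𝒜 δ y
        · rw [Function.update_of_ne hj, Function.update_of_ne hj]; exact hx j
      have hdeg : ∑ j, Function.update β i δ j = δ + ∑ j ∈ Finset.univ.erase i, β j := by
        rw [← Finset.add_sum_erase _ _ (Finset.mem_univ i), Function.update_self]
        congr 1
        exact Finset.sum_congr rfl
          (fun j hj => Function.update_of_ne (Finset.ne_of_mem_erase hj) _ _)
      by_cases hδ : δ = γ + β i
      · rw [if_pos hδ]
        have hd2 : γ + ∑ j, β j = ∑ j, Function.update β i δ j := by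
          rw [hdeg, hδ, hsplit, ← add_assoc]
        rw [hd2]
        exact projG_of_mem_same 𝒜 hmem
      · rw [if_neg hδ]
        refine projG_of_mem_ne 𝒜 hmem (fun hc => hδ ?_)
        rw [hdeg, hsplit, ← add_assoc] at hc
        exact add_right_cancel hc
    calc ∑ δ ∈ (DirectSum.decompose 𝒜 y).support,
          projG 𝒜 (γ + ∑ j, β j) (brkML F n (Function.update x i (projG 𝒜 δ y)))
        = ∑ δ ∈ (DirectSum.decompose 𝒜 y).support,
            if δ = γ + β i then brkML F n (Function.update x i (projG 𝒜 δ y)) else 0 :=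
          Finset.sum_congr rfl (fun δ _ => hterm δ)
      _ = brkML F n (Function.update x i (projG 𝒜 (γ + β i) y)) := by
          rw [Finset.sum_ite_eq' ((DirectSum.decompose 𝒜 y).support) (γ + β i)
            (fun δ => brkML F n (Function.update x i (projG 𝒜 δ y)))]
          by_cases hs : γ + β i ∈ (DirectSum.decompose 𝒜 y).support
          · rw [if_pos hs]
          · rw [if_neg hs, projG_eq_zero_of_not_mem_support 𝒜 hs,
              MultilinearMap.map_update_zero]
  intro x
  have := congrFun (congrArg DFunLike.coe main) x
  rw [LinearMap.compMultilinearMap_apply, MultilinearMap.sum_apply, brkML_apply] at this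
  rw [this]
  exact Finset.sum_congr rfl (fun i _ => by rw [gML_apply ψ i x, brkML_apply])

end Graded

section Span
variable {F L : Type*} [Field F] [LieRing L] [LieAlgebra F L]

/-- right-normed brackets of elements of `H` -/
def brkSet (F : Type*) {L : Type*} [Field F] [LieRing L] [LieAlgebra F L] (H : Set L) : Set L :=
  {b | ∃ l : List L, l ≠ [] ∧ (∀ a ∈ l, a ∈ H) ∧ itBracket l = b}

lemma lie_mem_span_brkSet {H : Set L} {a : L} (ha : a ∈ H) {w : L}
    (hw : w ∈ Submodule.span F (brkSet F H)) : ⁅a, w⁆ ∈ Submodule.span F (brkSet F H) := by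
  induction hw using Submodule.span_induction with
  | mem z hz =>
      obtain ⟨l, hl, hlH, rfl⟩ := hz
      refine Submodule.subset_span ⟨a :: l, by simp, ?_, itBracket_cons a l hl⟩
      intro b hb
      rcases List.mem_cons.mp hb with rfl | hb
      · exact ha
      · exact hlH b hb
  | zero => simp
  | add y z _ _ hy hz => rw [lie_add]; exact Submodule.add_mem _ hy hz
  | smul c y _ hy => rw [lie_smul]; exact Submodule.smul_mem _ c hy

lemma brk_bracket_mem (H : Set L) :
    ∀ (l₁ : List L), l₁ ≠ [] → (∀ a ∈ l₁, a ∈ H) →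
    ∀ (l₂ : List L), l₂ ≠ [] → (∀ a ∈ l₂, a ∈ H) →
      ⁅itBracket l₁, itBracket l₂⁆ ∈ Submodule.span F (brkSet F H)
  | [], h, _, _, _, _ => absurd rfl h
  | [a], _, h₁, l₂, h₂, h₂' => by
      have ha : a ∈ H := h₁ a (by simp)
      have hthis : itBracket [a] = a := rfl
      rw [hthis, ← itBracket_cons a l₂ h₂]
      refine Submodule.subset_span ⟨a :: l₂, by simp, ?_, rfl⟩
      intro b hb
      rcases List.mem_cons.mp hb with rfl | hb
      · exact ha
      · exact h₂' b hb
  | a :: b :: l', _, h₁, l₂, h₂, h₂' => by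
      have ha : a ∈ H := h₁ a (by simp)
      have h₁' : ∀ c ∈ b :: l', c ∈ H := fun c hc => h₁ c (by simp [hc])
      rw [itBracket_cons a (b :: l') (by simp), lie_lie]
      refine Submodule.sub_mem _ ?_ ?_
      · exact lie_mem_span_brkSet ha (brk_bracket_mem H (b :: l') (by simp) h₁' l₂ h₂ h₂')
      · have hcons : ∀ c ∈ a :: l₂, c ∈ H := by
          intro c hc
          rcases List.mem_cons.mp hc with rfl | hc
          · exact ha
          · exact h₂' c hc
        have := brk_bracket_mem H (b :: l') (by simp) h₁' (a :: l₂) (by simp) hcons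
        rwa [itBracket_cons a l₂ h₂] at this

/-- the span of right-normed brackets of `H` is a Lie subalgebra -/
noncomputable def brkSub (H : Set L) : LieSubalgebra F L :=
  { Submodule.span F (brkSet F H) with
    lie_mem' := by
      intro x y hx hy
      induction hx using Submodule.span_induction with
      | mem z hz =>
          induction hy using Submodule.span_induction with
          | mem w hw =>
              obtain ⟨l₁, hl₁, hl₁H, rfl⟩ := hz
              obtain ⟨l₂, hl₂, hl₂H, rfl⟩ := hw
              exact brk_bracket_mem H l₁ hl₁ hl₁H l₂ hl₂ hl₂H
          | zero => simp
          | add y z _ _ hy hz => rw [lie_add]; exact Submodule.add_mem _ hy hz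
          | smul c y _ hy => rw [lie_smul]; exact Submodule.smul_mem _ c hy
      | zero => rw [zero_lie]; exact Submodule.zero_mem _
      | add w z _ _ hw hz => rw [add_lie]; exact Submodule.add_mem _ hw hz
      | smul c w _ hw => rw [smul_lie]; exact Submodule.smul_mem _ c hw }

end Span

section Vanish
variable {G F L : Type*} [AddCommGroup G] [Field F] [LieRing L] [LieAlgebra F L]
variable (𝒜 : G → Submodule F L) [DirectSum.Decomposition 𝒜]

lemma itBracket_take_drop {L : Type*} [LieRing L] :
    ∀ (m : ℕ) (l : List L), m < l.length →
      itBracket (l.take m ++ [itBracket (l.drop m)]) = itBracket l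
  | 0, l, _ => rfl
  | (m+1), [], h => by simp at h
  | (m+1), a :: t, h => by
      have ht : m < t.length := Nat.lt_of_succ_lt_succ h
      have htne : t ≠ [] := by
        intro he; rw [he] at ht; simp at ht
      rw [List.take_succ_cons, List.drop_succ_cons, List.cons_append,
        itBracket_cons a _ (by simp), itBracket_take_drop m t ht, itBracket_cons a t htne]

lemma cmpG_vanish (hgraded : ∀ (α β : G), ∀ x ∈ 𝒜 α, ∀ y ∈ 𝒜 β, ⁅x, y⁆ ∈ 𝒜 (α + β))
    {φ : L →ₗ[F] L} {n : ℕ} (hn : 1 ≤ n) (hφ : IsNDeriv F (n+1) φ) (γ : G) {H : Set L}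
    (hγ : ∀ l : List L, l ≠ [] → l.length ≤ n → (∀ a ∈ l, a ∈ H) →
      cmpG 𝒜 φ γ (itBracket l) = 0) :
    ∀ (k : ℕ) (l : List L), l ≠ [] → l.length = k → (∀ a ∈ l, a ∈ H) →
      cmpG 𝒜 φ γ (itBracket l) = 0 := by
  intro k
  induction k using Nat.strong_induction_on with
  | _ k ih =>
    intro l hlne hlen hlH
    by_cases hk : k ≤ n
    · exact hγ l hlne (by omega) hlH
    · push_neg at hk
      have hkl : n < l.length := by omega
      set x : Fin (n+1) → L :=
        fun i => if h : (i:ℕ) < n then l[(i:ℕ)]'(by omega) else itBracket (l.drop n) with hx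
      have hofn : List.ofFn x = l.take n ++ [itBracket (l.drop n)] := by
        apply List.ext_getElem
        · simp; omega
        · intro i h1 h2
          rw [List.getElem_ofFn]
          by_cases hi : i < n
          · have hv : x ⟨i, by simpa using h1⟩ = l[i]'(by omega) := dif_pos hi
            rw [hv, List.getElem_append_left (by simp; omega), List.getElem_take]
          · have hv : x ⟨i, by simpa using h1⟩ = itBracket (l.drop n) := dif_neg hi
            rw [hv, List.getElem_append_right (by simp; omega)]
            simp
      have h1 : cmpG 𝒜 φ γ (itBracket l) = cmpG 𝒜 φ γ (itBracket (List.ofFn x)) := by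
        rw [hofn, itBracket_take_drop n l hkl]
      rw [h1, cmpG_isNDeriv 𝒜 hgraded hφ γ x]
      refine Finset.sum_eq_zero (fun i _ => ?_)
      have hzero : cmpG 𝒜 φ γ (x i) = 0 := by
        by_cases hi : (i:ℕ) < n
        · have hxi : x i = l[(i:ℕ)]'(by omega) := dif_pos hi
          rw [hxi]
          have := hγ [l[(i:ℕ)]'(by omega)] (by simp) (by simp; omega)
            (by
              intro a ha
              rw [List.mem_singleton] at ha
              rw [ha]
              exact hlH _ (List.getElem_mem _))
          simpa [itBracket] using this
        · have hxi : x i = itBracket (l.drop n) := dif_neg hi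
          rw [hxi]
          refine ih (k - n) (by omega) (l.drop n) ?_ (by simp [hlen])
            (fun a ha => hlH a (List.mem_of_mem_drop ha))
          rw [← List.length_pos_iff, List.length_drop]
          omega
      rw [hzero, ← brkML_apply F n, MultilinearMap.map_update_zero]

end Vanish

section Finiteness
variable {G F L : Type*} [AddCommGroup G] [Field F] [LieRing L] [LieAlgebra F L]
variable (𝒜 : G → Submodule F L) [DirectSum.Decomposition 𝒜]

lemma cmpG_pt_support_finite (φ : L →ₗ[F] L) (b : L) :
    {γ : G | cmpG 𝒜 φ γ b ≠ 0}.Finite := by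
  classical
  set s := (DirectSum.decompose 𝒜 b).support with hs
  have hsub : {γ : G | cmpG 𝒜 φ γ b ≠ 0} ⊆
      ⋃ β ∈ (s : Set G), {γ : G | projG 𝒜 (γ + β) (φ (projG 𝒜 β b)) ≠ 0} := by
    intro γ hγ
    by_contra hcon
    simp only [Set.mem_iUnion, Set.mem_setOf_eq, not_exists, not_not] at hcon
    apply hγ
    have hb : cmpG 𝒜 φ γ b = cmpG 𝒜 φ γ (∑ β ∈ s, projG 𝒜 β b) := by
      conv_lhs => rw [← sum_projG 𝒜 b]
    rw [hb, map_sum]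
    refine Finset.sum_eq_zero (fun β hβ => ?_)
    rw [cmpG_of_mem 𝒜 (projG_mem 𝒜 β b)]
    exact hcon β hβ
  refine Set.Finite.subset (Set.Finite.biUnion s.finite_toSet (fun β _ => ?_)) hsub
  have hsub2 : {γ : G | projG 𝒜 (γ + β) (φ (projG 𝒜 β b)) ≠ 0} ⊆ (fun γ => γ + β) ⁻¹'
      ((DirectSum.decompose 𝒜 (φ (projG 𝒜 β b))).support : Set G) := by
    intro γ hγ
    by_contra hc
    exact hγ (projG_eq_zero_of_not_mem_support 𝒜 (by simpa using hc))
  exact Set.Finite.subset (Set.Finite.preimage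
    (Set.injOn_of_injective (add_left_injective β)) (Finset.finite_toSet _)) hsub2

lemma cmpG_map_support_finite
    (hgraded : ∀ (α β : G), ∀ x ∈ 𝒜 α, ∀ y ∈ 𝒜 β, ⁅x, y⁆ ∈ 𝒜 (α + β))
    {φ : L →ₗ[F] L} {n : ℕ} (hn : 1 ≤ n) (hφ : IsNDeriv F (n+1) φ)
    {H : Set L} (hH : H.Finite) (hspan : Submodule.span F (brkSet F H) = ⊤) :
    {γ : G | cmpG 𝒜 φ γ ≠ 0}.Finite := by
  classical
  set Λ : Set (List L) := {l : List L | l ≠ [] ∧ l.length ≤ n ∧ ∀ a ∈ l, a ∈ H} with hΛdef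
  have hΛ : Λ.Finite := by
    haveI := hH.to_subtype
    have h1 : {l : List ↥H | l.length ≤ n}.Finite := List.finite_length_le ↥H n
    refine Set.Finite.subset (h1.image (List.map Subtype.val)) ?_
    rintro l ⟨hne, hlen, hmem⟩
    refine ⟨l.pmap (fun a h => (⟨a, h⟩ : ↥H)) hmem, ?_, ?_⟩
    · simpa using hlen
    · simp [List.map_pmap]
  have hsub : {γ : G | cmpG 𝒜 φ γ ≠ 0} ⊆
      ⋃ l ∈ Λ, {γ : G | cmpG 𝒜 φ γ (itBracket l) ≠ 0} := by
    intro γ hγ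
    by_contra hcon
    simp only [Set.mem_iUnion, Set.mem_setOf_eq, not_exists, not_not] at hcon
    apply hγ
    have hvanish : ∀ z ∈ Submodule.span F (brkSet F H), cmpG 𝒜 φ γ z = 0 := by
      intro z hz
      induction hz using Submodule.span_induction with
      | mem w hw =>
          obtain ⟨l, hl, hlH, rfl⟩ := hw
          exact cmpG_vanish 𝒜 hgraded hn hφ γ
            (fun l' h1 h2 h3 => hcon l' ⟨h1, h2, h3⟩) l.length l hl rfl hlH
      | zero => simp
      | add y z _ _ hy hz => rw [map_add, hy, hz, add_zero]
      | smul c y _ hy => rw [map_smul, hy, smul_zero]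
    ext z
    exact hvanish z (hspan ▸ Submodule.mem_top)
  exact Set.Finite.subset (hΛ.biUnion (fun l _ => cmpG_pt_support_finite 𝒜 φ (itBracket l))) hsub

end Finiteness

/-- For a finitely generated `G`-graded Lie algebra `L = ⊕_{α ∈ G} L_α` over a field `F`, the
Lie algebra of `N`-derivations decomposes as the internal direct sum
`Der⁽ᴺ⁾(L) = ⊕_{α ∈ G} Der⁽ᴺ⁾_α(L)` over the subspaces of `N`-derivations of homogeneous
degree `α`:  every `N`-derivation is a (finite) sum of `N`-derivations of homogeneous degrees,
and homogeneous `N`-derivations of pairwise distinct degrees are linearly independent, i.e. a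
finite sum of them vanishes only if each summand vanishes. -/
theorem nDerivations_graded (G F L : Type*) [AddCommGroup G] [Field F] [LieRing L]
    [LieAlgebra F L]
    (𝒜 : G → Submodule F L) [DirectSum.Decomposition 𝒜]
    (hgraded : ∀ (α β : G), ∀ x ∈ 𝒜 α, ∀ y ∈ 𝒜 β, ⁅x, y⁆ ∈ 𝒜 (α + β))
    (hfg : ∃ S : Finset L, LieSubalgebra.lieSpan F L (S : Set L) = ⊤)
    (N : ℕ) (hN : 2 ≤ N) :
    (∀ φ : L →ₗ[F] L, IsNDeriv F N φ →
        ∃ (T : Finset G) (c : G → (L →ₗ[F] L)),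
          (∀ γ : G, IsNDeriv F N (c γ)) ∧ (∀ γ : G, IsHomogOfDeg 𝒜 γ (c γ)) ∧
            (∀ γ ∉ T, c γ = 0) ∧ φ = ∑ γ ∈ T, c γ) ∧
      (∀ (T : Finset G) (c : G → (L →ₗ[F] L)),
          (∀ γ : G, IsNDeriv F N (c γ)) → (∀ γ : G, IsHomogOfDeg 𝒜 γ (c γ)) →
            ∑ γ ∈ T, c γ = 0 → ∀ γ ∈ T, c γ = 0) := by
  classical
  obtain ⟨n, rfl⟩ : ∃ n, N = n + 1 := ⟨N - 1, by omega⟩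
  have hn : 1 ≤ n := by omega
  constructor
  · intro φ hφ
    obtain ⟨S, hS⟩ := hfg
    set H : Set L := ⋃ s ∈ (S : Set L), (fun δ => projG 𝒜 δ s) ''
      ((DirectSum.decompose 𝒜 s).support : Set G) with hHdef
    have hHfin : H.Finite :=
      S.finite_toSet.biUnion
        (fun s _ => ((DirectSum.decompose 𝒜 s).support.finite_toSet).image _)
    have hspan : Submodule.span F (brkSet F H) = ⊤ := by
      have hle : LieSubalgebra.lieSpan F L (S : Set L) ≤ brkSub (F := F) H := by
        refine LieSubalgebra.lieSpan_le.mpr ?_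
        intro s hs
        show s ∈ Submodule.span F (brkSet F H)
        have hsum : s = ∑ δ ∈ (DirectSum.decompose 𝒜 s).support, projG 𝒜 δ s :=
          (sum_projG 𝒜 s).symm
        rw [hsum]
        refine Submodule.sum_mem _ (fun δ hδ => ?_)
        refine Submodule.subset_span ⟨[projG 𝒜 δ s], by simp, ?_, rfl⟩
        intro a ha
        rw [List.mem_singleton] at ha
        subst ha
        exact Set.mem_biUnion hs ⟨δ, by simpa using hδ, rfl⟩
      rw [eq_top_iff]
      intro z _
      exact hle (hS.symm ▸ LieSubalgebra.mem_top z)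
    have hΩ := cmpG_map_support_finite 𝒜 hgraded hn hφ hHfin hspan
    refine ⟨hΩ.toFinset, fun γ => cmpG 𝒜 φ γ, fun γ => cmpG_isNDeriv 𝒜 hgraded hφ γ,
      fun γ => cmpG_homog 𝒜 φ γ, ?_, ?_⟩
    · intro γ hγ
      by_contra hne
      exact hγ (hΩ.mem_toFinset.mpr hne)
    · refine ext_homog 𝒜 (fun β x hx => ?_)
      simp only [LinearMap.coe_sum, Finset.sum_apply]
      set T := hΩ.toFinset with hTdef
      set T' : Finset G := (DirectSum.decompose 𝒜 (φ x)).support.image (fun δ => δ - β)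
        with hT'def
      have hT'sum : ∑ γ ∈ T', cmpG 𝒜 φ γ x = φ x := by
        rw [hT'def, Finset.sum_image (fun a _ b _ h => by
          have := congrArg (· + β) h
          simpa using this)]
        rw [Finset.sum_congr rfl (fun δ _ => by rw [cmpG_of_mem 𝒜 hx, sub_add_cancel])]
        exact sum_projG 𝒜 (φ x)
      have hzero1 : ∀ γ, γ ∉ T' → cmpG 𝒜 φ γ x = 0 := by
        intro γ hγ
        rw [cmpG_of_mem 𝒜 hx]
        refine projG_eq_zero_of_not_mem_support 𝒜 (fun hc => hγ ?_)
        exact Finset.mem_image.mpr ⟨γ + β, hc, by abel⟩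
      have hzero2 : ∀ γ, γ ∉ T → cmpG 𝒜 φ γ x = 0 := by
        intro γ hγ
        have h0 : cmpG 𝒜 φ γ = 0 := by
          by_contra hne
          exact hγ (hΩ.mem_toFinset.mpr hne)
        rw [h0, LinearMap.zero_apply]
      calc φ x = ∑ γ ∈ T', cmpG 𝒜 φ γ x := hT'sum.symm
        _ = ∑ γ ∈ T ∪ T', cmpG 𝒜 φ γ x :=
            Finset.sum_subset Finset.subset_union_right
              (fun γ _ h2 => hzero1 γ h2)
        _ = ∑ γ ∈ T, cmpG 𝒜 φ γ x :=
            (Finset.sum_subset Finset.subset_union_left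
              (fun γ _ h2 => hzero2 γ h2)).symm
  · intro T c hder hhom hsum γ₀ hγ₀
    refine ext_homog 𝒜 (fun β x hx => ?_)
    rw [LinearMap.zero_apply]
    have h0 : ∀ γ ∈ T, projG 𝒜 (γ₀ + β) (c γ x) = if γ = γ₀ then c γ x else 0 := by
      intro γ _
      by_cases hγ : γ = γ₀
      · rw [if_pos hγ, hγ]
        exact projG_of_mem_same 𝒜 (hhom γ₀ β x hx)
      · rw [if_neg hγ]
        exact projG_of_mem_ne 𝒜 (hhom γ β x hx) (fun hc => hγ (add_right_cancel hc))
    have hsx : ∑ γ ∈ T, c γ x = 0 := by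
      have := congrArg (fun ψ : L →ₗ[F] L => ψ x) hsum
      simpa using this
    have hkey : projG 𝒜 (γ₀ + β) (∑ γ ∈ T, c γ x) = 0 := by rw [hsx, map_zero]
    rw [map_sum, Finset.sum_congr rfl h0, Finset.sum_ite_eq' T γ₀ (fun γ => c γ x),
      if_pos hγ₀] at hkey
    exact hkey
end

section
/- Let d ≥ 1 and let w_d = Der_ℂ(A) be the generalized Witt algebra, where A = ℂ[t_1^{±1}, …, t_d^{±1}]. For n = (n_1,…,n_d) ∈ ℤ^d and 1 ≤ j ≤ d, set D_j(n) = t^n t_j ∂/∂t_j ∈ w_d, where t^n = t_1^{n_1}⋯t_d^{n_d}. Then w_d is generated as a Lie algebra by the finite set { D_i(±ε_j), D_i(±2ε_j) : i, j = 1, …, d }, where ε_1, …, ε_d is the standard basis of ℤ^d. -/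
/-- The Laurent polynomial ring `ℂ[t₁^{±1}, …, t_d^{±1}]`, realized as the group algebra of
`ℤ^d` over `ℂ`. -/
abbrev LaurentAlg (d : ℕ) : Type := AddMonoidAlgebra ℂ (Fin d → ℤ)

/-- The generalized Witt algebra `w_d`: the Lie algebra of `ℂ`-linear derivations of the
Laurent polynomial ring `ℂ[t₁^{±1}, …, t_d^{±1}]`, with bracket the commutator. -/
abbrev WittAlg (d : ℕ) : Type := Derivation ℂ (LaurentAlg d) (LaurentAlg d)

/-- The linear endomorphism `t_j ∂/∂t_j` of the Laurent polynomial ring: it sends the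
monomial `t^m` to `m_j • t^m`. -/
noncomputable def euler (d : ℕ) (j : Fin d) : (LaurentAlg d) →ₗ[ℂ] (LaurentAlg d) :=
  (Finsupp.lsum ℂ fun m : Fin d → ℤ => (m j : ℂ) • AddMonoidAlgebra.lsingle m) ∘ₗ
    (AddMonoidAlgebra.coeffLinearEquiv ℂ).toLinearMap

lemma euler_single (d : ℕ) (j : Fin d) (m : Fin d → ℤ) (c : ℂ) :
    euler d j (AddMonoidAlgebra.single m c) = AddMonoidAlgebra.single m ((m j : ℂ) * c) := by
  show (Finsupp.lsum ℂ fun m : Fin d → ℤ => (m j : ℂ) • AddMonoidAlgebra.lsingle m)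
    (Finsupp.single m c) = _
  rw [Finsupp.lsum_single, LinearMap.smul_apply, AddMonoidAlgebra.lsingle_apply,
    AddMonoidAlgebra.smul_single, smul_eq_mul]

/-- The derivation `t_j ∂/∂t_j` of the Laurent polynomial ring. -/
noncomputable def eulerDer (d : ℕ) (j : Fin d) : WittAlg d where
  toLinearMap := euler d j
  map_one_eq_zero' := by
    have h : (1 : LaurentAlg d) = AddMonoidAlgebra.single (0 : Fin d → ℤ) (1 : ℂ) := rfl
    rw [h, euler_single]
    simp
  leibniz' := by
    intro a b
    show euler d j (a * b) = a • euler d j b + b • euler d j a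
    rw [smul_eq_mul, smul_eq_mul]
    induction a using AddMonoidAlgebra.induction_linear with
    | zero => simp
    | add f g hf hg => rw [add_mul, map_add, hf, hg, map_add, mul_add, add_mul]; ring
    | single m c =>
      induction b using AddMonoidAlgebra.induction_linear with
      | zero => simp
      | add f g hf hg => rw [mul_add, map_add, hf, hg, map_add, mul_add, add_mul]; ring
      | single m' c' =>
        rw [AddMonoidAlgebra.single_mul_single, euler_single, euler_single, euler_single,
          AddMonoidAlgebra.single_mul_single, AddMonoidAlgebra.single_mul_single,
          add_comm m' m, ← AddMonoidAlgebra.single_add]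
        congr 1
        push_cast [Pi.add_apply]
        ring

/-- The derivation `D_i(n) = t^n t_i ∂/∂t_i` of the Laurent polynomial ring; it sends the
monomial `t^m` to `m_i • t^{n+m}`.  These span the generalized Witt algebra `w_d`. -/
noncomputable def wittD (d : ℕ) (i : Fin d) (n : Fin d → ℤ) : WittAlg d :=
  (AddMonoidAlgebra.single n (1 : ℂ) : LaurentAlg d) • eulerDer d i

section Aux

variable {d : ℕ}

lemma single_mul (n m : Fin d → ℤ) (b c : ℂ) :
    (AddMonoidAlgebra.single n b : LaurentAlg d) * AddMonoidAlgebra.single m c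
      = AddMonoidAlgebra.single (n + m) (b * c) :=
  AddMonoidAlgebra.single_mul_single _ _ _ _

lemma wittD_apply_single (i : Fin d) (n m : Fin d → ℤ) (c : ℂ) :
    wittD d i n (AddMonoidAlgebra.single m c) = AddMonoidAlgebra.single (n + m) ((m i : ℂ) * c) := by
  rw [wittD, Derivation.smul_apply]
  rw [show eulerDer d i (AddMonoidAlgebra.single m c) = AddMonoidAlgebra.single m ((m i : ℂ) * c) from
    euler_single d i m c]
  rw [smul_eq_mul]
  show (AddMonoidAlgebra.single n (1:ℂ) : LaurentAlg d) * AddMonoidAlgebra.single m ((m i : ℂ) * c)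
      = AddMonoidAlgebra.single (n + m) ((m i : ℂ) * c)
  rw [single_mul, one_mul]

lemma wittD_bracket (i k : Fin d) (n m : Fin d → ℤ) :
    ⁅wittD d i n, wittD d k m⁆
      = (m i : ℂ) • wittD d k (n + m) - (n k : ℂ) • wittD d i (n + m) := by
  refine Derivation.ext fun a => ?_
  induction a using AddMonoidAlgebra.induction_linear with
  | zero => simp
  | add f g hf hg => rw [map_add, map_add, hf, hg]
  | single p c =>
    rw [Derivation.commutator_apply, wittD_apply_single, wittD_apply_single,
      wittD_apply_single, wittD_apply_single, Derivation.sub_apply,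
      Derivation.smul_apply, Derivation.smul_apply, wittD_apply_single, wittD_apply_single,
      AddMonoidAlgebra.smul_single, AddMonoidAlgebra.smul_single,
      show n + (m + p) = n + m + p from (add_assoc n m p).symm,
      show m + (n + p) = n + m + p by rw [← add_assoc, add_comm m n],
      ← AddMonoidAlgebra.single_sub, ← AddMonoidAlgebra.single_sub]
    congr 1
    push_cast [Pi.add_apply, smul_eq_mul]
    ring

end Aux

section Span

variable {d : ℕ}

lemma wittD_bracket_same (k : Fin d) (n m : Fin d → ℤ) :
    ⁅wittD d k n, wittD d k m⁆ = ((m k : ℂ) - (n k : ℂ)) • wittD d k (n + m) := by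
  refine Derivation.ext fun a => ?_
  induction a using AddMonoidAlgebra.induction_linear with
  | zero => simp
  | add f g hf hg => rw [map_add, map_add, hf, hg]
  | single p c =>
    rw [Derivation.commutator_apply, wittD_apply_single, wittD_apply_single,
      wittD_apply_single, wittD_apply_single, Derivation.smul_apply, wittD_apply_single,
      AddMonoidAlgebra.smul_single,
      show n + (m + p) = n + m + p from (add_assoc n m p).symm,
      show m + (n + p) = n + m + p by rw [← add_assoc, add_comm m n],
      ← AddMonoidAlgebra.single_sub]
    congr 1
    push_cast [Pi.add_apply, smul_eq_mul]
    ring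

/-- The generating set. -/
def WGen (d : ℕ) : Set (WittAlg d) :=
  {w : WittAlg d | ∃ (i j : Fin d) (c : ℤ), (c = 1 ∨ c = -1 ∨ c = 2 ∨ c = -2) ∧
    w = wittD d i (c • Pi.single j (1 : ℤ))}

local notation "L" => LieSubalgebra.lieSpan ℂ (WittAlg d) (WGen d)

lemma single_apply_ne (j l : Fin d) (h : l ≠ j) (v : ℤ) :
    (Pi.single j v : Fin d → ℤ) l = 0 := by rw [Pi.single_apply, if_neg h]

lemma add3_swap (P x S : Fin d → ℤ) : P + (x + S) = P + S + x := by
  rw [add_comm x S, ← add_assoc]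

lemma smul_eps (j : Fin d) (v : ℤ) :
    v • (Pi.single j (1 : ℤ) : Fin d → ℤ) = Pi.single j v := by
  funext l
  by_cases h : l = j <;> simp [Pi.single_apply, h]

lemma gen_mem (i j : Fin d) (c : ℤ) (hc : c = 1 ∨ c = -1 ∨ c = 2 ∨ c = -2) :
    wittD d i (Pi.single j c) ∈ L := by
  rw [← smul_eps]
  exact LieSubalgebra.subset_lieSpan ⟨i, j, c, hc, rfl⟩

lemma mem_of_smul_mem (x : WittAlg d) (f : ℂ) (hf : f ≠ 0) (h : f • x ∈ L) : x ∈ L := by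
  have h2 := (LieSubalgebra.lieSpan ℂ (WittAlg d) (WGen d)).smul_mem f⁻¹ h
  rwa [smul_smul, inv_mul_cancel₀ hf, one_smul] at h2

lemma shift_mem {k : Fin d} {n m : Fin d → ℤ} (h1 : wittD d k n ∈ L) (h2 : wittD d k m ∈ L)
    (hne : m k ≠ n k) : wittD d k (n + m) ∈ L := by
  have hb := LieSubalgebra.lie_mem _ h1 h2
  rw [wittD_bracket_same] at hb
  refine mem_of_smul_mem _ _ ?_ hb
  rw [sub_ne_zero]
  exact_mod_cast hne

lemma axis_mem (k : Fin d) (v : ℤ) : wittD d k (Pi.single k v) ∈ L := by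
  have key : ∀ t : ℕ, wittD d k (Pi.single k (t : ℤ)) ∈ L ∧
      wittD d k (Pi.single k (-(t : ℤ))) ∈ L := by
    intro t
    induction t with
    | zero =>
      have h0 := shift_mem (gen_mem k k 1 (by norm_num)) (gen_mem k k (-1) (by norm_num))
        (by simp)
      rw [← Pi.single_add] at h0
      norm_num at h0
      constructor <;> simpa using h0
    | succ t ih =>
      match t, ih with
      | 0, _ =>
        refine ⟨?_, ?_⟩
        · simpa using gen_mem k k 1 (by norm_num)
        · simpa using gen_mem k k (-1) (by norm_num)
      | 1, _ =>
        refine ⟨?_, ?_⟩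
        · simpa using gen_mem k k 2 (by norm_num)
        · simpa using gen_mem k k (-2) (by norm_num)
      | (t + 2), ih =>
        constructor
        · have h0 := shift_mem (gen_mem k k 1 (by norm_num)) ih.1 (by simp; omega)
          rw [← Pi.single_add, show (1 : ℤ) + ((t + 2 : ℕ) : ℤ) = ((t + 3 : ℕ) : ℤ) by
            push_cast; ring] at h0
          exact h0
        · have h0 := shift_mem (gen_mem k k (-1) (by norm_num)) ih.2 (by simp; omega)
          rw [← Pi.single_add, show (-1 : ℤ) + -((t + 2 : ℕ) : ℤ) = -((t + 3 : ℕ) : ℤ) by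
            push_cast; ring] at h0
          exact h0
  rcases Int.natAbs_eq v with h | h
  · rw [h]; exact (key v.natAbs).1
  · rw [h]; exact (key v.natAbs).2

lemma off_axis_mem (k j : Fin d) (hjk : j ≠ k) (m : Fin d → ℤ) (hm : wittD d k m ∈ L)
    (hk : m k ≠ 0) (v : ℤ) : wittD d k (m + Pi.single j v) ∈ L := by
  have hjk1 : (Pi.single j (1 : ℤ) : Fin d → ℤ) k = 0 := single_apply_ne j k (Ne.symm hjk) 1
  have hjkm : ∀ w : ℤ, (Pi.single j w : Fin d → ℤ) k = 0 :=
    fun w => single_apply_ne j k (Ne.symm hjk) w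
  have key : ∀ t : ℕ, wittD d k (m + Pi.single j (t : ℤ)) ∈ L ∧
      wittD d k (m + Pi.single j (-(t : ℤ))) ∈ L := by
    intro t
    induction t with
    | zero => constructor <;> simpa using hm
    | succ t ih =>
      constructor
      · have e : (Pi.single j (1 : ℤ) : Fin d → ℤ) + (m + Pi.single j (t : ℤ))
            = m + Pi.single j ((t + 1 : ℕ) : ℤ) := by
          funext l
          by_cases hl : l = j
          · simp only [Pi.add_apply, Pi.single_apply, if_pos hl]
            push_cast
            ring
          · simp only [Pi.add_apply, Pi.single_apply, if_neg hl]
            ring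
        have h0 := shift_mem (gen_mem k j 1 (by norm_num)) ih.1
          (by simp only [Pi.add_apply, hjkm, hjk1, add_zero]; exact hk)
        rw [e] at h0
        exact h0
      · have e : (Pi.single j (-1 : ℤ) : Fin d → ℤ) + (m + Pi.single j (-(t : ℤ)))
            = m + Pi.single j (-((t + 1 : ℕ) : ℤ)) := by
          funext l
          by_cases hl : l = j
          · simp only [Pi.add_apply, Pi.single_apply, if_pos hl]
            push_cast
            ring
          · simp only [Pi.add_apply, Pi.single_apply, if_neg hl]
            ring
        have h0 := shift_mem (gen_mem k j (-1) (by norm_num)) ih.2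
          (by simp only [Pi.add_apply, hjkm, add_zero]; exact hk)
        rw [e] at h0
        exact h0
  rcases Int.natAbs_eq v with h | h
  · rw [h]; exact (key v.natAbs).1
  · rw [h]; exact (key v.natAbs).2

lemma full_mem (k : Fin d) (m : Fin d → ℤ) : wittD d k m ∈ L := by
  have nonzero : ∀ m : Fin d → ℤ, m k ≠ 0 → wittD d k m ∈ L := by
    intro m hk
    have key : ∀ F : Finset (Fin d), k ∉ F →
        wittD d k (Pi.single k (m k) + ∑ j ∈ F, Pi.single j (m j)) ∈ L := by
      intro F
      induction F using Finset.induction_on with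
      | empty => intro _; simpa using axis_mem k (m k)
      | @insert a s ha ih =>
        intro hins
        have hak : a ≠ k := fun h => hins (h ▸ Finset.mem_insert_self a s)
        have hks : k ∉ s := fun h => hins (Finset.mem_insert_of_mem h)
        have hsum : ((Pi.single k (m k) : Fin d → ℤ) + ∑ j ∈ s, Pi.single j (m j)) k = m k := by
          rw [Pi.add_apply, Pi.single_eq_same, Finset.sum_apply]
          rw [Finset.sum_eq_zero fun j hj =>
            single_apply_ne j k (by rintro rfl; exact hks hj) (m j)]
          exact add_zero _
        have h0 := off_axis_mem k a hak _ (ih hks) (by rw [hsum]; exact hk) (m a)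
        rw [Finset.sum_insert ha, add3_swap]
        exact h0
    have hrepr : (Pi.single k (m k) : Fin d → ℤ)
        + ∑ j ∈ Finset.univ.erase k, Pi.single j (m j) = m := by
      funext l
      rw [Pi.add_apply, Finset.sum_apply]
      by_cases hl : l = k
      · rw [hl, Pi.single_eq_same, Finset.sum_eq_zero fun j hj =>
          single_apply_ne j k (by rintro rfl; exact (Finset.mem_erase.mp hj).1 rfl) (m j)]
        exact add_zero _
      · rw [Pi.single_eq_of_ne hl]
        rw [Finset.sum_eq_single_of_mem l (Finset.mem_erase.mpr ⟨hl, Finset.mem_univ l⟩)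
          fun j _ hjl => single_apply_ne j l (fun h => hjl h.symm) (m j)]
        rw [Pi.single_eq_same, zero_add]
    have := key (Finset.univ.erase k) (Finset.notMem_erase k _)
    rwa [hrepr] at this
  by_cases hk : m k = 0
  · have h1 : ((m + Pi.single k 1 : Fin d → ℤ)) k ≠ 0 := by simp [hk]
    have e : (Pi.single k (-1 : ℤ) : Fin d → ℤ) + (m + Pi.single k 1) = m := by
      funext l
      by_cases hl : l = k
      · simp only [Pi.add_apply, Pi.single_apply, if_pos hl]
        ring
      · simp only [Pi.add_apply, Pi.single_apply, if_neg hl]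
        ring
    have h0 := shift_mem (gen_mem k k (-1) (by norm_num)) (nonzero _ h1) (by simp [hk])
    rwa [e] at h0
  · exact nonzero m hk


noncomputable def tmon (d : ℕ) (n : Fin d → ℤ) : LaurentAlg d := AddMonoidAlgebra.single n 1

lemma tmon_mul (n m : Fin d → ℤ) : tmon d n * tmon d m = tmon d (n + m) := by
  show (AddMonoidAlgebra.single n (1:ℂ) : LaurentAlg d) * AddMonoidAlgebra.single m 1
      = AddMonoidAlgebra.single (n + m) 1
  rw [AddMonoidAlgebra.single_mul_single, one_mul]

lemma tmon_zero : tmon d 0 = 1 := rfl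

lemma eulerDer_tmon (i : Fin d) (m : Fin d → ℤ) :
    eulerDer d i (tmon d m) = (m i : ℂ) • tmon d m := by
  show eulerDer d i (AddMonoidAlgebra.single m 1) = (m i : ℂ) • (AddMonoidAlgebra.single m (1 : ℂ) : LaurentAlg d)
  rw [show eulerDer d i (AddMonoidAlgebra.single m 1)
      = AddMonoidAlgebra.single m ((m i : ℂ) * 1) from euler_single d i m 1]
  rw [AddMonoidAlgebra.smul_single, smul_eq_mul]

lemma single_eq_smul_tmon (n : Fin d → ℤ) (c : ℂ) :
    (AddMonoidAlgebra.single n c : LaurentAlg d) = c • tmon d n := by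
  rw [show tmon d n = AddMonoidAlgebra.single n 1 from rfl, AddMonoidAlgebra.smul_single, smul_eq_mul, mul_one]

lemma tmon_smul_eulerDer (j : Fin d) (n : Fin d → ℤ) :
    tmon d n • eulerDer d j = wittD d j n := rfl

lemma derSum_apply {ι : Type*} (s : Finset ι) (f : ι → WittAlg d) (x : LaurentAlg d) :
    (∑ i ∈ s, f i) x = ∑ i ∈ s, f i x := by
  induction s using Finset.cons_induction with
  | empty => simp
  | cons a s ha ih => rw [Finset.sum_cons, Finset.sum_cons, Derivation.add_apply, ih]

lemma top_mem (D : WittAlg d) : D ∈ L := by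
  classical
  set D' : WittAlg d :=
    ∑ j, (tmon d (-(Pi.single j 1 : Fin d → ℤ)) * D (tmon d (Pi.single j 1))) • eulerDer d j
    with hD'
  have hD'mem : D' ∈ L := by
    rw [hD']
    refine sum_mem fun j _ => ?_
    generalize tmon d (-(Pi.single j 1 : Fin d → ℤ)) * D (tmon d (Pi.single j 1)) = x
    induction x using AddMonoidAlgebra.induction_linear with
    | zero => rw [zero_smul]; exact zero_mem _
    | add f g hf hg => rw [add_smul]; exact add_mem hf hg
    | single n c =>
      rw [single_eq_smul_tmon n c, smul_assoc, tmon_smul_eulerDer]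
      exact (LieSubalgebra.lieSpan ℂ (WittAlg d) (WGen d)).smul_mem c (full_mem j n)
  have key : ∀ n : Fin d → ℤ, (D - D') (tmon d n) = 0 := by
    set E : WittAlg d := D - D' with hEdef
    have hGsingle : ∀ j : Fin d, E (tmon d (Pi.single j 1 : Fin d → ℤ)) = 0 := by
      intro j
      have happ : D' (tmon d (Pi.single j 1 : Fin d → ℤ)) = D (tmon d (Pi.single j 1)) := by
        rw [hD', derSum_apply]
        rw [Finset.sum_eq_single_of_mem j (Finset.mem_univ j) ?side]
        case side =>
          intro i _ hij
          rw [Derivation.smul_apply, eulerDer_tmon, single_apply_ne j i hij 1,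
            Int.cast_zero, zero_smul, smul_zero]
        rw [Derivation.smul_apply, eulerDer_tmon, Pi.single_eq_same, Int.cast_one,
          one_smul, smul_eq_mul]
        rw [mul_right_comm, tmon_mul, neg_add_cancel, tmon_zero, one_mul]
      rw [hEdef, Derivation.sub_apply, happ, sub_self]
    let G : AddSubgroup (Fin d → ℤ) :=
    { carrier := {n | E (tmon d n) = 0}
      zero_mem' := by
        show E (tmon d 0) = 0
        rw [tmon_zero]
        exact E.map_one_eq_zero
      add_mem' := by
        intro n n' hn hn'
        show E (tmon d (n + n')) = 0
        rw [← tmon_mul, E.leibniz, show E (tmon d n') = 0 from hn',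
          show E (tmon d n) = 0 from hn, smul_zero, smul_zero, add_zero]
      neg_mem' := by
        intro n hn
        show E (tmon d (-n)) = 0
        have hu : tmon d n * tmon d (-n) = 1 := by
          rw [tmon_mul, add_neg_cancel, tmon_zero]
        have hl := E.leibniz (tmon d n) (tmon d (-n))
        rw [hu, E.map_one_eq_zero, show E (tmon d n) = 0 from hn,
          smul_zero, add_zero] at hl
        have h2 := congrArg (fun x : LaurentAlg d => tmon d (-n) * x) hl.symm
        simp only [smul_eq_mul, mul_zero] at h2
        rw [← mul_assoc, mul_comm (tmon d (-n)) (tmon d n), hu, one_mul] at h2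
        exact h2 }
    intro n
    have hnG : n ∈ G := by
      have h1 : n = ∑ j, (n j) • (Pi.single j 1 : Fin d → ℤ) := by
        rw [Finset.sum_congr rfl fun j _ => smul_eps j (n j), Finset.univ_sum_single]
      rw [h1]
      exact sum_mem fun j _ => G.zsmul_mem (hGsingle j) (n j)
    exact hnG
  have hzero : D - D' = 0 := by
    refine Derivation.ext fun x => ?_
    rw [Derivation.zero_apply]
    induction x using AddMonoidAlgebra.induction_linear with
    | zero => rw [map_zero]
    | add f g hf hg => rw [map_add, hf, hg, add_zero]
    | single n c =>
      rw [show (AddMonoidAlgebra.single n c : LaurentAlg d) = c • tmon d n from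
        single_eq_smul_tmon n c, Derivation.map_smul, key, smul_zero]
  have hDD' : D = D' := sub_eq_zero.mp hzero
  rw [hDD']
  exact hD'mem

end Span

/-- The generalized Witt algebra `w_d` (for `d ≥ 1`) is generated, as a Lie algebra, by the
finite set `{ D_i(±ε_j), D_i(±2ε_j) : i, j = 1, …, d }`, where `ε₁, …, ε_d` is the standard
basis of `ℤ^d`. -/
theorem wittAlg_finitely_generated (d : ℕ) (hd : 1 ≤ d) :
    LieSubalgebra.lieSpan ℂ (WittAlg d)
      {w : WittAlg d | ∃ (i j : Fin d) (c : ℤ), (c = 1 ∨ c = -1 ∨ c = 2 ∨ c = -2) ∧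
        w = wittD d i (c • Pi.single j (1 : ℤ))} = ⊤ := by
  rw [eq_top_iff]
  rintro D -
  exact top_mem D
end

section
/- Let 𝔰𝔳 be the Schrödinger–Virasoro algebra over ℂ, the Lie algebra with ℂ-basis { L_n, M_n, Y_{n+1/2}, C : n ∈ ℤ } and brackets [L_m, L_n] = (n−m)L_{m+n} + δ_{m+n,0}(n³−n)/12 · C, [L_m, M_n] = n M_{m+n}, [L_m, Y_{n+1/2}] = (n + (1−m)/2) Y_{m+n+1/2}, [Y_{m+1/2}, Y_{n+1/2}] = (n−m) M_{m+n+1}, [M_m, M_n] = 0, [M_m, Y_{n+1/2}] = 0, and [𝔰𝔳, C] = 0. Then for every integer N ≥ 3, every N-derivation of 𝔰𝔳 is a derivation of 𝔰𝔳; that is, Der^(N)(𝔰𝔳) = Der(𝔰𝔳). -/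
open scoped BigOperators

/-- Index set for the standard basis `{Lₙ, Mₙ, Y_{n+1/2}, C : n ∈ ℤ}` of the
Schrödinger–Virasoro algebra; `Y n` stands for `Y_{n+1/2}`. -/
inductive SVIdx : Type
  | L : ℤ → SVIdx
  | M : ℤ → SVIdx
  | Y : ℤ → SVIdx
  | C : SVIdx


namespace SVAux

variable {L : Type*} [LieRing L]

lemma itBracket_cons (a : L) (l : List L) (h : l ≠ []) :
    itBracket (a :: l) = ⁅a, itBracket l⁆ := by
  cases l with
  | nil => exact absurd rfl h
  | cons b t => rfl

lemma itBracket_append_singleton (l : List L) (v : L) :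
    itBracket (l ++ [v]) = l.foldr (fun x y => ⁅x, y⁆) v := by
  induction l with
  | nil => rfl
  | cons a t ih =>
      rw [List.cons_append, itBracket_cons _ _ (by simp), ih, List.foldr_cons]

lemma ofFn_ne_nil {n : ℕ} (f : Fin (n + 1) → L) : List.ofFn f ≠ [] := by
  apply List.ne_nil_of_length_pos
  simp

lemma itBracket_ofFn_succ {n : ℕ} (f : Fin (n + 1 + 1) → L) :
    itBracket (List.ofFn f) = ⁅f 0, itBracket (List.ofFn (fun i : Fin (n+1) => f i.succ))⁆ := by
  rw [List.ofFn_succ, itBracket_cons _ _ (ofFn_ne_nil _)]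

variable (F : Type*) [CommRing F] [LieAlgebra F L]

lemma foldr_replicate (m : ℕ) (z v : L) :
    (List.replicate m z).foldr (fun x y => ⁅x, y⁆) v = ((LieAlgebra.ad F L z) ^ m) v := by
  induction m with
  | zero => rfl
  | succ k ih =>
      rw [List.replicate_succ, List.foldr_cons, ih, pow_succ']
      rfl

lemma update_succ_comp {α : Type*} {k : ℕ} (f : Fin (k + 1) → α) (j : Fin k) (w : α) :
    (fun i : Fin k => Function.update f j.succ w i.succ)
      = Function.update (fun i : Fin k => f i.succ) j w := by
  funext i
  by_cases h : i = j
  · subst h; simp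
  · have h2 : i.succ ≠ j.succ := fun hc => h (Fin.succ_injective _ hc)
    simp only [Function.update_of_ne h, Function.update_of_ne h2]

lemma update_zero_comp {α : Type*} {k : ℕ} (f : Fin (k + 1) → α) (w : α) :
    (fun i : Fin k => Function.update f 0 w i.succ) = fun i : Fin k => f i.succ := by
  funext i
  simp only [Function.update_of_ne (Fin.succ_ne_zero i)]

lemma ofFn_update_const {α : Type*} (z w : α) :
    ∀ (k : ℕ) (j : Fin k),
      List.ofFn (Function.update (fun _ : Fin k => z) j w)
        = List.replicate (j : ℕ) z ++ w :: List.replicate (k - 1 - (j : ℕ)) z := by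
  intro k
  induction k with
  | zero => exact fun j => j.elim0
  | succ k ih =>
      intro j
      refine Fin.cases ?_ ?_ j
      · rw [List.ofFn_succ]
        rw [show (fun i : Fin k => (Function.update (fun _ : Fin (k+1) => z) 0 w) i.succ)
              = (fun _ : Fin k => z) from update_zero_comp _ _]
        simp [List.ofFn_const]
      · intro j'
        rw [List.ofFn_succ]
        rw [show (fun i : Fin k => (Function.update (fun _ : Fin (k+1) => z) j'.succ w) i.succ)
              = Function.update (fun _ : Fin k => z) j' w from update_succ_comp _ _ _]
        rw [ih j']
        simp only [Function.update_of_ne (Fin.succ_ne_zero j').symm]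
        rw [Fin.val_succ]
        rw [show (k + 1 - 1 - (j' + 1) : ℕ) = k - 1 - j' from by omega]
        rfl

end SVAux

section Part2
namespace SVAux

variable {L : Type*} [LieRing L] {F : Type*} [CommRing F] [LieAlgebra F L]

set_option linter.unusedSectionVars false

lemma lie_sum' (F : Type*) {L : Type*} [LieRing L] [CommRing F] [LieAlgebra F L]
    {ι : Type*} (s : Finset ι) (a : L) (f : ι → L) :
    ⁅a, ∑ i ∈ s, f i⁆ = ∑ i ∈ s, ⁅a, f i⁆ :=
  map_sum (LieAlgebra.ad F L a) f s

/-- The master instance of the `N`-derivation identity, with slots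
`(a, z, z, …, z, v)`. -/
lemma nderiv_master (m : ℕ) (φ : L →ₗ[F] L) (h : IsNDeriv F (m + 2) φ) (a z v : L) :
    φ ⁅a, ((LieAlgebra.ad F L z) ^ m) v⁆
      = ⁅φ a, ((LieAlgebra.ad F L z) ^ m) v⁆ + ⁅a, ((LieAlgebra.ad F L z) ^ m) (φ v)⁆
        + ∑ j : Fin m, ⁅a, ((LieAlgebra.ad F L z) ^ (j : ℕ))
            ⁅φ z, ((LieAlgebra.ad F L z) ^ (m - 1 - (j : ℕ))) v⁆⁆ := by
  classical
  set A := LieAlgebra.ad F L z with hA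
  set y : Fin (m + 1) → L := Fin.snoc (fun _ : Fin m => z) v with hy
  have hofy : ∀ g : Fin m → L, ∀ t : L,
      List.ofFn (Fin.snoc g t : Fin (m+1) → L) = List.ofFn g ++ [t] := by
    intro g t
    rw [List.ofFn_succ']
    simp [Fin.snoc_castSucc, Fin.snoc_last, List.concat_eq_append]
  have hit_const : ∀ t : L, itBracket (List.ofFn (Fin.snoc (fun _ : Fin m => z) t : Fin (m+1) → L))
      = (A ^ m) t := by
    intro t
    rw [hofy, itBracket_append_singleton, List.ofFn_const, foldr_replicate F]
  have key := h (Fin.cons a y)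
  -- LHS
  have hL : itBracket (List.ofFn (Fin.cons a y : Fin (m+2) → L)) = ⁅a, (A ^ m) v⁆ := by
    rw [List.ofFn_succ, itBracket_cons _ _ (ofFn_ne_nil _)]
    simp only [Fin.cons_zero, Fin.cons_succ]
    rw [hit_const v]
  rw [hL] at key
  -- RHS : peel the first summand
  rw [Fin.sum_univ_succ] at key
  have h0 : itBracket (List.ofFn (Function.update (Fin.cons a y : Fin (m+2) → L) 0
      (φ ((Fin.cons a y : Fin (m+2) → L) 0)))) = ⁅φ a, (A ^ m) v⁆ := by
    rw [show ((Fin.cons a y : Fin (m+2) → L) 0) = a from by simp,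
      Fin.update_cons_zero]
    rw [List.ofFn_succ, itBracket_cons _ _ (ofFn_ne_nil _)]
    simp only [Fin.cons_zero, Fin.cons_succ]
    rw [hit_const v]
  rw [h0] at key
  -- remaining summands
  have hsucc : ∀ i : Fin (m+1),
      itBracket (List.ofFn (Function.update (Fin.cons a y : Fin (m+2) → L) i.succ
        (φ ((Fin.cons a y : Fin (m+2) → L) i.succ))))
      = ⁅a, itBracket (List.ofFn (Function.update y i (φ (y i))))⁆ := by
    intro i
    rw [show ((Fin.cons a y : Fin (m+2) → L) i.succ) = y i from by simp]
    rw [← Fin.cons_update]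
    rw [List.ofFn_succ, itBracket_cons _ _ (ofFn_ne_nil _)]
    simp only [Fin.cons_zero, Fin.cons_succ]
  simp only [hsucc] at key
  rw [Fin.sum_univ_castSucc] at key
  have hlast : itBracket (List.ofFn (Function.update y (Fin.last m) (φ (y (Fin.last m)))))
      = (A ^ m) (φ v) := by
    rw [show y (Fin.last m) = v from Fin.snoc_last _ _, hy, Fin.update_snoc_last]
    exact hit_const (φ v)
  rw [hlast] at key
  have hmid : ∀ j : Fin m,
      itBracket (List.ofFn (Function.update y j.castSucc (φ (y j.castSucc))))
      = (A ^ (j : ℕ)) ⁅φ z, (A ^ (m - 1 - (j : ℕ))) v⁆ := by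
    intro j
    rw [show y j.castSucc = z from Fin.snoc_castSucc _ _ _]
    rw [hy, ← Fin.snoc_update, hofy, ofFn_update_const,
      itBracket_append_singleton]
    rw [List.foldr_append, List.foldr_cons, foldr_replicate F, foldr_replicate F]
  simp only [hmid] at key
  rw [key]
  abel

/-- A derivation satisfies the `n+1`-fold Leibniz rule. -/
lemma deriv_iterated (φ : L →ₗ[F] L)
    (h : ∀ x y : L, φ ⁅x, y⁆ = ⁅φ x, y⁆ + ⁅x, φ y⁆) :
    ∀ (n : ℕ) (x : Fin (n + 1) → L),
      φ (itBracket (List.ofFn x)) =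
        ∑ i : Fin (n+1), itBracket (List.ofFn (Function.update x i (φ (x i)))) := by
  intro n
  induction n with
  | zero =>
      intro x
      rw [Fin.sum_univ_one]
      rw [show (List.ofFn x) = [x 0] from by simp [List.ofFn_succ]]
      rw [show (List.ofFn (Function.update x 0 (φ (x 0)))) = [φ (x 0)] from by
        simp [List.ofFn_succ]]
      rfl
  | succ n ih =>
      intro x
      rw [itBracket_ofFn_succ, h, Fin.sum_univ_succ]
      have h0 : itBracket (List.ofFn (Function.update x 0 (φ (x 0))))
          = ⁅φ (x 0), itBracket (List.ofFn (fun i : Fin (n+1) => x i.succ))⁆ := by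
        rw [List.ofFn_succ, itBracket_cons _ _ (ofFn_ne_nil _), Function.update_self,
          update_zero_comp]
      rw [h0]
      congr 1
      have hsucc : ∀ i : Fin (n+1),
          itBracket (List.ofFn (Function.update x i.succ (φ (x i.succ))))
          = ⁅x 0, itBracket (List.ofFn (Function.update (fun i' : Fin (n+1) => x i'.succ) i
              (φ (x i.succ))))⁆ := by
        intro i
        rw [List.ofFn_succ, itBracket_cons _ _ (ofFn_ne_nil _),
          Function.update_of_ne (Fin.succ_ne_zero i).symm, update_succ_comp]
      simp only [hsucc]
      rw [ih (fun i : Fin (n+1) => x i.succ), lie_sum' F]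

end SVAux
end Part2

deriving instance DecidableEq for SVIdx

namespace SVAux

/-- Degree (conformal weight) of the basis elements, as a rational number. -/
def deg : SVIdx → ℚ
  | .L n => n
  | .M n => n
  | .Y n => (n : ℚ) + 1/2
  | .C => 0

lemma int_ne_int_add_half (a b : ℤ) : (a : ℚ) ≠ (b : ℚ) + 1/2 := by
  intro h
  have h2 : ((2*a : ℤ) : ℚ) = ((2*b+1 : ℤ) : ℚ) := by push_cast; linarith
  have h3 : (2*a : ℤ) = 2*b+1 := Int.cast_injective h2
  omega

section SVMain

variable {V : Type*} [LieRing V] [LieAlgebra ℂ V] (B : Module.Basis SVIdx ℂ V)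

/-- Projection onto the degree-`β` part, with respect to the basis `B`. -/
noncomputable def svProj (β : ℚ) : V →ₗ[ℂ] V :=
  B.constr ℂ (fun i => if deg i = β then B i else 0)

lemma svProj_basis (β : ℚ) (i : SVIdx) :
    svProj B β (B i) = if deg i = β then B i else 0 :=
  B.constr_basis ℂ _ i

lemma proj_smul_basis (β : ℚ) (c : ℂ) (k : SVIdx) :
    svProj B β (c • B k) = if deg k = β then c • B k else 0 := by
  rw [map_smul, svProj_basis]
  split_ifs <;> simp

lemma repr_proj (β : ℚ) (v : V) (j : SVIdx) :
    B.repr (svProj B β v) j = if deg j = β then B.repr v j else 0 := by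
  have key : (Finsupp.lapply j : (SVIdx →₀ ℂ) →ₗ[ℂ] ℂ) ∘ₗ
        ((B.repr : V ≃ₗ[ℂ] (SVIdx →₀ ℂ)) : V →ₗ[ℂ] (SVIdx →₀ ℂ)) ∘ₗ svProj B β
      = if deg j = β
        then (Finsupp.lapply j : (SVIdx →₀ ℂ) →ₗ[ℂ] ℂ) ∘ₗ
          ((B.repr : V ≃ₗ[ℂ] (SVIdx →₀ ℂ)) : V →ₗ[ℂ] (SVIdx →₀ ℂ))
        else 0 := by
    split_ifs with hj
    · refine B.ext fun i => ?_
      simp only [LinearMap.comp_apply, LinearEquiv.coe_coe, Finsupp.lapply_apply]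
      rw [svProj_basis]
      by_cases hi : deg i = β
      · rw [if_pos hi]
      · rw [if_neg hi, map_zero]
        have hij : i ≠ j := fun hc => hi (hc ▸ hj)
        simp [Module.Basis.repr_self, Finsupp.single_apply, hij, Finsupp.coe_zero]
    · refine B.ext fun i => ?_
      simp only [LinearMap.comp_apply, LinearEquiv.coe_coe, Finsupp.lapply_apply,
        LinearMap.zero_apply]
      rw [svProj_basis]
      by_cases hi : deg i = β
      · rw [if_pos hi]
        have hij : i ≠ j := fun hc => hj (hc ▸ hi)
        simp [Module.Basis.repr_self, Finsupp.single_apply, hij]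
      · rw [if_neg hi, map_zero]
        simp
  have h2 := LinearMap.congr_fun key v
  by_cases hj : deg j = β
  · rw [if_pos hj] at h2 ⊢
    simpa using h2
  · rw [if_neg hj] at h2 ⊢
    simpa using h2

lemma proj_proj (α γ : ℚ) (v : V) :
    svProj B α (svProj B γ v) = if α = γ then svProj B γ v else 0 := by
  apply B.repr.injective
  ext j
  rw [repr_proj, repr_proj]
  split_ifs with h1 h2 h3 h3 <;>
    simp_all [repr_proj]

lemma proj_recover (γ : ℚ) (v : V) (h : ∀ β, β ≠ γ → svProj B β v = 0) :
    svProj B γ v = v := by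
  apply B.repr.injective
  ext j
  rw [repr_proj]
  by_cases hj : deg j = γ
  · rw [if_pos hj]
  · rw [if_neg hj]
    have h2 := congrArg (fun t => B.repr t j) (h (deg j) hj)
    simp only [repr_proj, if_pos rfl, map_zero, Finsupp.coe_zero, Pi.zero_apply] at h2
    exact h2.symm

end SVMain

end SVAux

namespace SVAux
section SVBrackets

variable {V : Type*} [LieRing V] [LieAlgebra ℂ V] (B : Module.Basis SVIdx ℂ V)
variable (hLL : ∀ m n : ℤ, ⁅B (.L m), B (.L n)⁆ =
      ((n : ℂ) - m) • B (.L (m + n)) +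
        (if m + n = 0 then ((n : ℂ) ^ 3 - n) / 12 else 0) • B .C)
    (hLM : ∀ m n : ℤ, ⁅B (.L m), B (.M n)⁆ = (n : ℂ) • B (.M (m + n)))
    (hLY : ∀ m n : ℤ, ⁅B (.L m), B (.Y n)⁆ = ((n : ℂ) + (1 - (m : ℂ)) / 2) • B (.Y (m + n)))
    (hYY : ∀ m n : ℤ, ⁅B (.Y m), B (.Y n)⁆ = ((n : ℂ) - m) • B (.M (m + n + 1)))
    (hMM : ∀ m n : ℤ, ⁅B (.M m), B (.M n)⁆ = 0)
    (hMY : ∀ m n : ℤ, ⁅B (.M m), B (.Y n)⁆ = 0)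
    (hC : ∀ v : V, ⁅v, B .C⁆ = 0)

set_option linter.unusedSectionVars false
include hLL hLM hLY hYY hMM hMY hC

lemma lieC_left (j : SVIdx) : ⁅B .C, B j⁆ = 0 := by
  rw [← lie_skew, hC, neg_zero]

lemma adL0_basis (i : SVIdx) :
    ⁅B (.L 0), B i⁆ = ((deg i : ℚ) : ℂ) • B i := by
  cases i with
  | L n =>
      rw [hLL 0 n]
      have hz : (if (0 + n : ℤ) = 0 then ((n:ℂ)^3 - n) / 12 else 0) = 0 := by
        rcases eq_or_ne n 0 with rfl | h
        · norm_num
        · rw [if_neg (by omega)]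
      rw [hz, zero_smul, add_zero, zero_add]
      norm_num [deg]
  | M n =>
      rw [hLM 0 n, zero_add]
      norm_num [deg]
  | Y n =>
      rw [hLY 0 n, zero_add]
      push_cast [deg]
      norm_num
  | C =>
      rw [hC, deg]
      norm_num

/-- The bracket of two basis vectors is homogeneous of the expected degree. -/
lemma projBB (i j : SVIdx) (β : ℚ) :
    svProj B β ⁅B i, B j⁆ = if deg i + deg j = β then ⁅B i, B j⁆ else 0 := by
  cases i with
  | L m =>
    cases j with
    | L n =>
        rw [hLL m n, map_add, proj_smul_basis, proj_smul_basis]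
        by_cases hb : deg (SVIdx.L m) + deg (SVIdx.L n) = β
        · rw [if_pos hb]
          rw [if_pos (show deg (SVIdx.L (m+n)) = β from by
            simp only [deg] at hb ⊢; push_cast; linarith)]
          congr 1
          by_cases hmn : m + n = 0
          · rw [if_pos (show deg SVIdx.C = β from by
              have h0 : (m:ℚ) + n = 0 := by exact_mod_cast congrArg (fun t : ℤ => (t : ℚ)) hmn
              simp only [deg] at hb ⊢
              linarith)]
          · rw [if_neg hmn]
            simp
        · rw [if_neg hb]
          rw [if_neg (show ¬ deg (SVIdx.L (m+n)) = β from by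
            intro hc; apply hb; simp only [deg] at hc ⊢; push_cast at hc; linarith)]
          by_cases hmn : m + n = 0
          · rw [if_neg (show ¬ deg SVIdx.C = β from by
              intro hc; apply hb
              have h0 : (m:ℚ) + n = 0 := by exact_mod_cast congrArg (fun t : ℤ => (t : ℚ)) hmn
              simp only [deg] at hc ⊢
              linarith)]
            simp
          · rw [if_neg hmn]
            simp
    | M n =>
        rw [hLM m n, proj_smul_basis,
          show deg (SVIdx.M (m+n)) = deg (SVIdx.L m) + deg (SVIdx.M n) from by
            simp only [deg]; push_cast; ring]
    | Y n =>
        rw [hLY m n, proj_smul_basis,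
          show deg (SVIdx.Y (m+n)) = deg (SVIdx.L m) + deg (SVIdx.Y n) from by
            simp only [deg]; push_cast; ring]
    | C => rw [hC]; simp
  | M m =>
    cases j with
    | L n =>
        rw [← lie_skew, hLM n m, map_neg, map_smul, svProj_basis,
          show deg (SVIdx.M (n+m)) = deg (SVIdx.M m) + deg (SVIdx.L n) from by
            simp only [deg]; push_cast; ring]
        split_ifs <;> simp
    | M n => rw [hMM]; simp
    | Y n => rw [hMY]; simp
    | C => rw [hC]; simp
  | Y m =>
    cases j with
    | L n =>
        rw [← lie_skew, hLY n m, map_neg, map_smul, svProj_basis,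
          show deg (SVIdx.Y (n+m)) = deg (SVIdx.Y m) + deg (SVIdx.L n) from by
            simp only [deg]; push_cast; ring]
        split_ifs <;> simp
    | M n =>
        rw [← lie_skew, hMY n m]
        simp
    | Y n =>
        rw [hYY m n, proj_smul_basis,
          show deg (SVIdx.M (m+n+1)) = deg (SVIdx.Y m) + deg (SVIdx.Y n) from by
            simp only [deg]; push_cast; ring]
    | C => rw [hC]; simp
  | C =>
    rw [lieC_left B hLL hLM hLY hYY hMM hMY hC]
    simp

/-- Projection shifts under bracketing with a homogeneous basis vector. -/
lemma proj_lie_basis (i : SVIdx) (β : ℚ) (v : V) :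
    svProj B β ⁅B i, v⁆ = ⁅B i, svProj B (β - deg i) v⁆ := by
  have key : (svProj B β) ∘ₗ ((LieAlgebra.ad ℂ V (B i) : Module.End ℂ V))
      = ((LieAlgebra.ad ℂ V (B i) : Module.End ℂ V)) ∘ₗ (svProj B (β - deg i)) := by
    refine B.ext fun j => ?_
    simp only [LinearMap.comp_apply, LieAlgebra.ad_apply]
    rw [projBB B hLL hLM hLY hYY hMM hMY hC i j β, svProj_basis]
    by_cases hj : deg j = β - deg i
    · rw [if_pos hj, if_pos (by rw [hj]; ring)]
    · rw [if_neg hj, if_neg (by intro hc; apply hj; rw [← hc]; ring), lie_zero]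
  have := LinearMap.congr_fun key v
  simpa using this

lemma proj_adL0 (β : ℚ) (v : V) :
    svProj B β ⁅B (.L 0), v⁆ = ((β : ℚ) : ℂ) • svProj B β v := by
  rw [proj_lie_basis B hLL hLM hLY hYY hMM hMY hC (.L 0) β v]
  have key : ∀ w : V, ⁅B (.L 0), svProj B β w⁆ = ((β:ℚ):ℂ) • svProj B β w := by
    intro w
    have k2 : (LieAlgebra.ad ℂ V (B (.L 0)) : Module.End ℂ V) ∘ₗ svProj B β
        = (((β:ℚ):ℂ) • (svProj B β) : V →ₗ[ℂ] V) := by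
      refine B.ext fun j => ?_
      simp only [LinearMap.comp_apply, LieAlgebra.ad_apply, LinearMap.smul_apply]
      rw [svProj_basis]
      by_cases hj : deg j = β
      · rw [if_pos hj, adL0_basis B hLL hLM hLY hYY hMM hMY hC j, hj]
      · rw [if_neg hj, lie_zero, smul_zero]
    have := LinearMap.congr_fun k2 w
    simpa using this
  rw [show deg (SVIdx.L 0) = 0 from rfl, sub_zero, key v]

end SVBrackets
end SVAux

namespace SVAux
section SVKill

variable {V : Type*} [LieRing V] [LieAlgebra ℂ V] (B : Module.Basis SVIdx ℂ V)
variable (hLL : ∀ m n : ℤ, ⁅B (.L m), B (.L n)⁆ =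
      ((n : ℂ) - m) • B (.L (m + n)) +
        (if m + n = 0 then ((n : ℂ) ^ 3 - n) / 12 else 0) • B .C)
    (hLM : ∀ m n : ℤ, ⁅B (.L m), B (.M n)⁆ = (n : ℂ) • B (.M (m + n)))
    (hLY : ∀ m n : ℤ, ⁅B (.L m), B (.Y n)⁆ = ((n : ℂ) + (1 - (m : ℂ)) / 2) • B (.Y (m + n)))
    (hYY : ∀ m n : ℤ, ⁅B (.Y m), B (.Y n)⁆ = ((n : ℂ) - m) • B (.M (m + n + 1)))
    (hMM : ∀ m n : ℤ, ⁅B (.M m), B (.M n)⁆ = 0)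
    (hMY : ∀ m n : ℤ, ⁅B (.M m), B (.Y n)⁆ = 0)
    (hC : ∀ v : V, ⁅v, B .C⁆ = 0)

set_option linter.unusedSectionVars false
include hLL hLM hLY hYY hMM hMY hC

lemma kill_int (n : ℤ) (hn : n ≠ 0) (t : V)
    (hsupp : svProj B (-(n : ℚ)) t = t)
    (hbr : ∀ i : SVIdx, deg i ≠ 0 → deg i ≠ (n : ℚ) → ⁅B i, t⁆ = 0) :
    t = 0 := by
  have hcoord : ∀ j : SVIdx, deg j ≠ -(n:ℚ) → B.repr t j = 0 := by
    intro j hj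
    have h2 := congrArg (fun v => B.repr v j) hsupp
    simp only [repr_proj, if_neg hj] at h2
    exact h2.symm
  set a := B.repr t (.L (-n)) with ha
  set b := B.repr t (.M (-n)) with hb
  have ht : t = a • B (.L (-n)) + b • B (.M (-n)) := by
    apply B.repr.injective
    ext j
    simp only [map_add, map_smul, Module.Basis.repr_self, Finsupp.coe_add, Finsupp.coe_smul,
      Pi.add_apply, Pi.smul_apply, Finsupp.single_apply, smul_eq_mul]
    rcases j with k | k | k | _
    · by_cases hk : (SVIdx.L (-n)) = (SVIdx.L k)
      · rw [if_pos hk, if_neg (by intro hcon; cases hcon)]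
        cases hk
        simp [← ha]
      · rw [if_neg hk, if_neg (by intro hcon; cases hcon)]
        have hkn : k ≠ -n := by intro hcon; exact hk (by rw [hcon])
        rw [hcoord (SVIdx.L k) (by
          simp only [deg]
          exact_mod_cast fun hcon => hkn (by exact_mod_cast hcon))]
        ring
    · by_cases hk : (SVIdx.M (-n)) = (SVIdx.M k)
      · rw [if_pos hk, if_neg (by intro hcon; cases hcon)]
        cases hk
        simp [← hb]
      · rw [if_neg hk, if_neg (by intro hcon; cases hcon)]
        have hkn : k ≠ -n := by intro hcon; exact hk (by rw [hcon])
        rw [hcoord (SVIdx.M k) (by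
          simp only [deg]
          exact_mod_cast fun hcon => hkn (by exact_mod_cast hcon))]
        ring
    · rw [if_neg (by intro hcon; cases hcon), if_neg (by intro hcon; cases hcon)]
      rw [hcoord (SVIdx.Y k) (by
        simp only [deg]
        intro hcon
        exact int_ne_int_add_half (-n) k (by push_cast at hcon ⊢; linarith))]
      ring
    · rw [if_neg (by intro hcon; cases hcon), if_neg (by intro hcon; cases hcon)]
      rw [hcoord SVIdx.C (by
        simp only [deg]
        intro hcon
        have hq : (n : ℚ) = 0 := by linarith
        exact hn (by exact_mod_cast hq))]
      ring
  -- step A : a = 0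
  have hA : a = 0 := by
    have hd1 : deg (SVIdx.Y n) ≠ 0 := by
      simp only [deg]
      intro hcon
      exact int_ne_int_add_half 0 n (by push_cast at hcon ⊢; linarith)
    have hd2 : deg (SVIdx.Y n) ≠ (n : ℚ) := by
      simp only [deg]
      intro hcon
      exact int_ne_int_add_half n n (by push_cast at hcon ⊢; linarith)
    have h0 := hbr (SVIdx.Y n) hd1 hd2
    rw [ht, lie_add, lie_smul, lie_smul, ← lie_skew (B (SVIdx.Y n)) (B (SVIdx.L (-n))),
      ← lie_skew (B (SVIdx.Y n)) (B (SVIdx.M (-n))),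
      hLY (-n) n, hMY (-n) n, neg_zero, smul_zero, add_zero, smul_neg, neg_eq_zero,
      smul_smul] at h0
    rcases smul_eq_zero.mp h0 with h3 | h2
    · rcases mul_eq_zero.mp h3 with h4 | h4
      · exact h4
      · exfalso
        have h5 : ((3 * n + 1 : ℤ) : ℂ) = 0 := by
          push_cast
          push_cast at h4
          linear_combination 2 * h4
        have h6 : (3 * n + 1 : ℤ) = 0 := by exact_mod_cast h5
        omega
    · exact absurd h2 (B.ne_zero _)
  -- step B : b = 0
  have hB : b = 0 := by
    have hd1 : deg (SVIdx.L (-n)) ≠ 0 := by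
      simp only [deg]
      intro hcon
      exact hn (by exact_mod_cast neg_eq_zero.mp (by exact_mod_cast hcon))
    have hd2 : deg (SVIdx.L (-n)) ≠ (n : ℚ) := by
      simp only [deg]
      intro hcon
      have : (-n : ℤ) = n := by exact_mod_cast hcon
      omega
    have h0 := hbr (SVIdx.L (-n)) hd1 hd2
    have hLL0 : ⁅B (.L (-n)), B (.L (-n))⁆ = 0 := lie_self _
    rw [ht, lie_add, lie_smul, lie_smul, hLL0, smul_zero, zero_add, hLM (-n) (-n)] at h0
    have h1 : (b * ((-n : ℤ) : ℂ)) • B (.M (-n + -n)) = 0 := by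
      rw [← h0, smul_smul]
    rcases smul_eq_zero.mp h1 with h2 | h2
    · rcases mul_eq_zero.mp h2 with h4 | h4
      · exact h4
      · exfalso
        have h6 : (-n : ℤ) = 0 := by exact_mod_cast h4
        omega
    · exact absurd h2 (B.ne_zero _)
  rw [ht, hA, hB, zero_smul, zero_smul, add_zero]

lemma kill_half (k : ℤ) (t : V)
    (hsupp : svProj B (-((k : ℚ) + 1/2)) t = t)
    (hbr : ∀ i : SVIdx, deg i ≠ 0 → deg i ≠ (k : ℚ) + 1/2 → ⁅B i, t⁆ = 0) :
    t = 0 := by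
  have hcoord : ∀ j : SVIdx, deg j ≠ -((k:ℚ) + 1/2) → B.repr t j = 0 := by
    intro j hj
    have h2 := congrArg (fun v => B.repr v j) hsupp
    simp only [repr_proj, if_neg hj] at h2
    exact h2.symm
  set c := B.repr t (.Y (-k-1)) with hc
  have ht : t = c • B (.Y (-k-1)) := by
    apply B.repr.injective
    ext j
    simp only [map_smul, Module.Basis.repr_self, Finsupp.coe_smul,
      Pi.smul_apply, Finsupp.single_apply, smul_eq_mul]
    rcases j with k' | k' | k' | _
    · rw [if_neg (by intro hcon; cases hcon)]
      rw [hcoord (SVIdx.L k') (by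
        simp only [deg]
        intro hcon
        exact int_ne_int_add_half k' (-k-1) (by push_cast at hcon ⊢; linarith))]
      ring
    · rw [if_neg (by intro hcon; cases hcon)]
      rw [hcoord (SVIdx.M k') (by
        simp only [deg]
        intro hcon
        exact int_ne_int_add_half k' (-k-1) (by push_cast at hcon ⊢; linarith))]
      ring
    · by_cases hk : (SVIdx.Y (-k-1)) = (SVIdx.Y k')
      · rw [if_pos hk]
        cases hk
        simp [← hc]
      · rw [if_neg hk]
        have hkn : k' ≠ -k-1 := by intro hcon; exact hk (by rw [hcon])
        rw [hcoord (SVIdx.Y k') (by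
          simp only [deg]
          intro hcon
          apply hkn
          have : (k' : ℚ) = (-k -1 : ℤ) := by push_cast; linarith
          exact_mod_cast this)]
        ring
    · rw [if_neg (by intro hcon; cases hcon)]
      rw [hcoord SVIdx.C (by
        simp only [deg]
        intro hcon
        exact int_ne_int_add_half 0 (-k-1) (by push_cast at hcon ⊢; linarith))]
      ring
  have hd1 : deg (SVIdx.L 2) ≠ 0 := by simp only [deg]; norm_num
  have hd2 : deg (SVIdx.L 2) ≠ (k:ℚ) + 1/2 := by
    simp only [deg]
    exact int_ne_int_add_half 2 k
  have h0 := hbr (SVIdx.L 2) hd1 hd2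
  rw [ht, lie_smul, hLY 2 (-k-1)] at h0
  rw [smul_smul] at h0
  rcases smul_eq_zero.mp h0 with h2 | h2
  · rcases mul_eq_zero.mp h2 with h4 | h4
    · rw [ht, h4, zero_smul]
    · exfalso
      have h5 : ((2 * (-k-1) - 1 : ℤ) : ℂ) = 0 := by
        push_cast
        push_cast at h4
        linear_combination 2 * h4
      have h6 : (2 * (-k-1) - 1 : ℤ) = 0 := by exact_mod_cast h5
      omega
  · exact absurd h2 (B.ne_zero _)

end SVKill
end SVAux


open SVAux in
/-- For every `N ≥ 3`, every `N`-derivation of the Schrödinger–Virasoro algebra `𝔰𝔳` (here: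
any complex Lie algebra with basis `{Lₙ, Mₙ, Y_{n+1/2}, C}` satisfying the defining bracket
relations of `𝔰𝔳`) is a derivation: `Der⁽ᴺ⁾(𝔰𝔳) = Der(𝔰𝔳)`. -/
theorem nDerivations_schrodingerVirasoro
    (V : Type*) [LieRing V] [LieAlgebra ℂ V] (B : Module.Basis SVIdx ℂ V)
    (hLL : ∀ m n : ℤ, ⁅B (.L m), B (.L n)⁆ =
      ((n : ℂ) - m) • B (.L (m + n)) +
        (if m + n = 0 then ((n : ℂ) ^ 3 - n) / 12 else 0) • B .C)
    (hLM : ∀ m n : ℤ, ⁅B (.L m), B (.M n)⁆ = (n : ℂ) • B (.M (m + n)))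
    (hLY : ∀ m n : ℤ, ⁅B (.L m), B (.Y n)⁆ = ((n : ℂ) + (1 - (m : ℂ)) / 2) • B (.Y (m + n)))
    (hYY : ∀ m n : ℤ, ⁅B (.Y m), B (.Y n)⁆ = ((n : ℂ) - m) • B (.M (m + n + 1)))
    (hMM : ∀ m n : ℤ, ⁅B (.M m), B (.M n)⁆ = 0)
    (hMY : ∀ m n : ℤ, ⁅B (.M m), B (.Y n)⁆ = 0)
    (hC : ∀ v : V, ⁅v, B .C⁆ = 0)
    (N : ℕ) (hN : 3 ≤ N) :
    {φ : V →ₗ[ℂ] V | IsNDeriv ℂ N φ} =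
      {φ : V →ₗ[ℂ] V | ∀ x y : V, φ ⁅x, y⁆ = ⁅φ x, y⁆ + ⁅x, φ y⁆} := by
  classical
  obtain ⟨m, rfl⟩ : ∃ m, N = m + 2 := ⟨N - 2, by omega⟩
  ext φ
  simp only [Set.mem_setOf_eq]
  constructor
  · -- hard direction : N-derivation → derivation
    intro hφ
    set T : V → V →ₗ[ℂ] V := fun x =>
      φ ∘ₗ (LieAlgebra.ad ℂ V x : Module.End ℂ V)
        - (LieAlgebra.ad ℂ V (φ x) : Module.End ℂ V)
        - (LieAlgebra.ad ℂ V x : Module.End ℂ V) ∘ₗ φ with hTset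
    have hT : ∀ x y : V, T x y = φ ⁅x, y⁆ - ⁅φ x, y⁆ - ⁅x, φ y⁆ := by
      intro x y
      rw [hTset]
      simp [LieAlgebra.ad_apply]
    have hskew : ∀ p q : V, ⁅p, q⁆ = -⁅q, p⁆ := by
      intro p q
      rw [lie_skew]
    have T_anti : ∀ x y : V, T y x = - T x y := by
      intro x y
      rw [hT, hT, hskew y x, hskew (φ y) x, hskew y (φ x), map_neg]
      abel
    -- the master computation, packaged per basis vector
    have KEY : ∀ i₀ : SVIdx, ∃ E : V,
        (∀ a : V, (((deg i₀ : ℚ) : ℂ) ^ m) • T a (B i₀) = -⁅a, E⁆) ∧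
        (deg i₀ ≠ 0 → svProj B (-(deg i₀)) E = E) := by
      intro i₀
      set lamc : ℂ := ((deg i₀ : ℚ) : ℂ) with hlamc
      set u : V := B i₀ with hu
      set w : V := φ (B (.L 0)) with hw
      set A : Module.End ℂ V := LieAlgebra.ad ℂ V (B (.L 0)) with hA
      have hAu : ∀ k : ℕ, (A ^ k) u = lamc ^ k • u := by
        intro k
        induction k with
        | zero => simp
        | succ k ih =>
            rw [pow_succ', pow_succ', Module.End.mul_apply, ih, map_smul, hA,
              LieAlgebra.ad_apply, hu, adL0_basis B hLL hLM hLY hYY hMM hMY hC i₀, smul_smul,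
              mul_comm]
      refine ⟨lamc ^ m • φ u - (A ^ m) (φ u)
        - ∑ j : Fin m, lamc ^ (m - 1 - (j : ℕ)) • (A ^ (j : ℕ)) ⁅w, u⁆, ?_, ?_⟩
      · intro a
        have master := nderiv_master m φ hφ a (B (.L 0)) u
        simp only [← hA, hAu, lie_smul, map_smul, ← hw] at master
        rw [hT]
        rw [lie_sub, lie_sub, lie_smul, lie_sum' ℂ]
        simp only [lie_smul]
        linear_combination (norm := module) master
      · -- support of E
        intro hdeg0
        apply proj_recover
        intro β hβ
        set βc : ℂ := ((β : ℚ) : ℂ) with hβc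
        set f : V := svProj B β (φ u) with hf
        set g : V := svProj B β ⁅w, u⁆ with hg
        set Qc : ℂ := ∑ j ∈ Finset.range m, lamc ^ (m - 1 - j) * βc ^ j with hQc
        have proj_pow : ∀ (k : ℕ) (v : V), svProj B β ((A ^ k) v) = βc ^ k • svProj B β v := by
          intro k
          induction k with
          | zero => intro v; simp
          | succ k ih =>
              intro v
              rw [pow_succ', Module.End.mul_apply, hA, LieAlgebra.ad_apply,
                proj_adL0 B hLL hLM hLY hYY hMM hMY hC, ih, pow_succ', smul_smul]
        have hprojE : svProj B β (lamc ^ m • φ u - (A ^ m) (φ u)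
            - ∑ j : Fin m, lamc ^ (m - 1 - (j : ℕ)) • (A ^ (j : ℕ)) ⁅w, u⁆)
            = (lamc ^ m - βc ^ m) • f - Qc • g := by
          rw [map_sub, map_sub, map_smul, map_sum]
          simp only [map_smul, proj_pow]
          rw [← hf, ← hg]
          rw [show (∑ j : Fin m, lamc ^ (m - 1 - (j:ℕ)) • βc ^ (j:ℕ) • g)
              = Qc • g from ?_]
          · module
          · rw [hQc, Finset.sum_smul]
            rw [Fin.sum_univ_eq_sum_range (fun j => lamc ^ (m - 1 - j) • βc ^ j • g)]
            refine Finset.sum_congr rfl fun j _ => ?_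
            rw [smul_smul]
        -- the L₀ instance of the master identity, projected to degree β
        have st1L0 : lamc ^ m • T (B (.L 0)) u = -⁅B (.L 0), (lamc ^ m • φ u - (A ^ m) (φ u)
            - ∑ j : Fin m, lamc ^ (m - 1 - (j : ℕ)) • (A ^ (j : ℕ)) ⁅w, u⁆)⁆ := by
          have master := nderiv_master m φ hφ (B (.L 0)) (B (.L 0)) u
          simp only [← hA, hAu, lie_smul, map_smul, ← hw] at master
          rw [hT]
          rw [lie_sub, lie_sub, lie_smul, lie_sum' ℂ]
          simp only [lie_smul]
          linear_combination (norm := module) master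
        have hTL0 : T (B (.L 0)) u = lamc • φ u - ⁅w, u⁆ - ⁅B (.L 0), φ u⁆ := by
          rw [hT, hu, adL0_basis B hLL hLM hLY hYY hMM hMY hC i₀, map_smul, ← hw, ← hu,
        ← hlamc]
        have hdagger := congrArg (svProj B β) (hTL0 ▸ st1L0)
        rw [map_neg, proj_adL0 B hLL hLM hLY hYY hMM hMY hC, hprojE] at hdagger
        rw [map_smul, map_sub, map_sub, map_smul,
          proj_adL0 B hLL hLM hLY hYY hMM hMY hC, ← hf, ← hg, ← hβc] at hdagger
        -- hdagger : lamc^m • (lamc • f - g - βc • f) = -(βc • ((lamc^m - βc^m) • f - Qc • g))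
        rw [hprojE]
        by_cases hbeq : β = deg i₀
        · -- here g = 0 and the f-coefficient vanishes
          have hbl : βc = lamc := by rw [hβc, hlamc, hbeq]
          have hQval2 : lamc * Qc = (m : ℂ) * lamc ^ m := by
            rw [hQc, hbl, Finset.mul_sum]
            rw [show (∑ j ∈ Finset.range m, lamc * (lamc ^ (m - 1 - j) * lamc ^ j))
                = ∑ _j ∈ Finset.range m, lamc ^ m from
              Finset.sum_congr rfl fun j hj => by
                have hjm := Finset.mem_range.mp hj
                rw [← pow_add, ← pow_succ']
                congr 1
                omega]
            rw [Finset.sum_const, Finset.card_range, nsmul_eq_mul]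
          have hvec2 : (lamc * Qc) • g = ((m : ℂ) * lamc ^ m) • g := by rw [hQval2]
          have hg0 : ((m : ℂ) + 1) • (lamc ^ m • g) = 0 := by
            rw [hbl] at hdagger
            linear_combination (norm := module) (- hdagger) - hvec2
          have hlam0 : lamc ≠ 0 := by
            rw [hlamc]
            simp only [ne_eq, Rat.cast_eq_zero]
            exact hdeg0
          have hg00 : g = 0 := by
            have h1 := smul_eq_zero.mp hg0
            rcases h1 with h1 | h1
            · exfalso
              have hm0 : ((m : ℂ) + 1) ≠ 0 := by
                have h3 : ((m + 1 : ℕ) : ℂ) ≠ 0 := Nat.cast_ne_zero.mpr (Nat.succ_ne_zero m)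
                push_cast at h3
                exact h3
              exact hm0 h1
            · rcases smul_eq_zero.mp h1 with h2 | h2
              · exact absurd h2 (pow_ne_zero m hlam0)
              · exact h2
          rw [hbl, hg00, sub_self, zero_smul, smul_zero, sub_zero]
        · -- here βc^(m+1) ≠ lamc^(m+1)
          have hkq : (deg i₀ : ℚ) ^ (m+1) - β ^ (m+1) ≠ 0 := by
            intro hcon
            have habs : |(deg i₀ : ℚ)| = |β| := by
              have h1 : (deg i₀ : ℚ) ^ (m+1) = β ^ (m+1) := by linarith
              have h2 : |(deg i₀ : ℚ)| ^ (m+1) = |β| ^ (m+1) := by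
                rw [← abs_pow, ← abs_pow, h1]
              exact (pow_left_strictMonoOn₀ (Nat.succ_ne_zero m)).injOn
                (show |(deg i₀ : ℚ)| ∈ {a : ℚ | 0 ≤ a} by simp only [Set.mem_setOf_eq]; positivity)
                (show |β| ∈ {a : ℚ | 0 ≤ a} by simp only [Set.mem_setOf_eq]; positivity) h2
            rcases abs_eq_abs.mp habs with h1 | h1
            · exact hbeq h1.symm
            · exact hβ (by rw [h1, neg_neg])
          have hk : lamc ^ (m+1) - βc ^ (m+1) ≠ 0 := by
            rw [hlamc, hβc]
            intro hcon
            apply hkq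
            have : (((deg i₀ : ℚ) ^ (m+1) - β ^ (m+1) : ℚ) : ℂ) = 0 := by
              push_cast
              exact hcon
            exact_mod_cast this
          set Q'c : ℂ := ∑ j ∈ Finset.range (m+1), lamc ^ (m - j) * βc ^ j with hQ'c
          have hQgeom : Qc * (βc - lamc) = βc ^ m - lamc ^ m := by
            rw [show Qc = ∑ j ∈ Finset.range m, βc ^ j * lamc ^ (m - 1 - j) from
              Finset.sum_congr rfl fun j _ => mul_comm _ _]
            exact geom_sum₂_mul βc lamc m
          have hQ'geom : Q'c * (βc - lamc) = βc ^ (m+1) - lamc ^ (m+1) := by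
            rw [show Q'c = ∑ j ∈ Finset.range (m+1), βc ^ j * lamc ^ (m + 1 - 1 - j) from
              Finset.sum_congr rfl fun j _ => mul_comm _ _]
            exact geom_sum₂_mul βc lamc (m+1)
          have hQ'top : Q'c = lamc ^ m + βc * Qc := by
            rw [hQ'c, Finset.sum_range_succ', hQc, Finset.mul_sum]
            have h1 : (∑ k ∈ Finset.range m, lamc ^ (m - (k + 1)) * βc ^ (k + 1))
                = ∑ k ∈ Finset.range m, βc * (lamc ^ (m - 1 - k) * βc ^ k) := by
              refine Finset.sum_congr rfl fun j hj => ?_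
              have := Finset.mem_range.mp hj
              rw [show m - (j+1) = m - 1 - j from by omega]
              ring
            rw [h1, Nat.sub_zero, pow_zero, mul_one, add_comm]
          -- derive the fundamental relation E1
          have E1 : (lamc ^ (m+1) - βc ^ (m+1)) • f = Q'c • g := by
            rw [hQ'top]
            linear_combination (norm := module) hdagger
          -- scalar identity
          have hpoly : (lamc ^ m - βc ^ m) * Q'c = (lamc ^ (m+1) - βc ^ (m+1)) * Qc := by
            have hne : βc - lamc ≠ 0 := by
              intro hcon
              apply hk
              have hbe : βc = lamc := by linear_combination hcon
              rw [hbe, sub_self]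
            apply mul_right_cancel₀ hne
            calc (lamc ^ m - βc ^ m) * Q'c * (βc - lamc)
                = (lamc ^ m - βc ^ m) * (Q'c * (βc - lamc)) := by ring
              _ = (lamc ^ m - βc ^ m) * (βc ^ (m+1) - lamc ^ (m+1)) := by rw [hQ'geom]
              _ = (lamc ^ (m+1) - βc ^ (m+1)) * (βc ^ m - lamc ^ m) := by ring
              _ = (lamc ^ (m+1) - βc ^ (m+1)) * (Qc * (βc - lamc)) := by rw [hQgeom]
              _ = (lamc ^ (m+1) - βc ^ (m+1)) * Qc * (βc - lamc) := by ring
          -- conclude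
          have hvec : ((lamc ^ m - βc ^ m) * Q'c) • g = ((lamc ^ (m+1) - βc ^ (m+1)) * Qc) • g := by
            rw [hpoly]
          have hfinal : (lamc ^ (m+1) - βc ^ (m+1)) • ((lamc ^ m - βc ^ m) • f - Qc • g) = 0 := by
            linear_combination (norm := module) ((lamc ^ m - βc ^ m) • E1) + hvec
          rcases smul_eq_zero.mp hfinal with h1 | h1
          · exact absurd h1 hk
          · exact h1
    -- Step 2 : T a (B i₀) = 0 for basis vectors of nonzero degree
    have Tzero : ∀ i₀ : SVIdx, deg i₀ ≠ 0 → ∀ a : V, T a (B i₀) = 0 := by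
      intro i₀ hdeg0 a
      obtain ⟨E, hE1, hE2'⟩ := KEY i₀
      have hE2 := hE2' hdeg0
      have hbr : ∀ i : SVIdx, deg i ≠ 0 → deg i ≠ deg i₀ → ⁅B i, E⁆ = 0 := by
        intro i hi0 hii
        obtain ⟨E', hE'1, hE''⟩ := KEY i
        have hE'2 := hE'' hi0
        have e1 : ⁅B i, E⁆ = -(((deg i₀ : ℚ) : ℂ) ^ m • T (B i) (B i₀)) := by
          rw [hE1 (B i), neg_neg]
        have e2 : ⁅B i₀, E'⁆ = -(((deg i : ℚ) : ℂ) ^ m • T (B i₀) (B i)) := by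
          rw [hE'1 (B i₀), neg_neg]
        have hanti := T_anti (B i) (B i₀)
        have hsum : (((deg i : ℚ) : ℂ) ^ m) • ⁅B i, E⁆
            + (((deg i₀ : ℚ) : ℂ) ^ m) • ⁅B i₀, E'⁆ = 0 := by
          rw [e1, e2, hanti]
          module
        have hp := congrArg (svProj B (deg i - deg i₀)) hsum
        rw [map_add, map_smul, map_smul, map_zero,
          proj_lie_basis B hLL hLM hLY hYY hMM hMY hC i,
          proj_lie_basis B hLL hLM hLY hYY hMM hMY hC i₀,
          show deg i - deg i₀ - deg i = -(deg i₀) from by ring, hE2] at hp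
        rw [show svProj B (deg i - deg i₀ - deg i₀) E'
            = svProj B (deg i - deg i₀ - deg i₀) (svProj B (-(deg i)) E') from by rw [hE'2],
          proj_proj,
          if_neg (fun hcon : deg i - deg i₀ - deg i₀ = -(deg i) => hii (by linarith)),
          lie_zero, smul_zero, add_zero] at hp
        have hdi : (((deg i : ℚ) : ℂ)) ≠ 0 := by
          simp only [ne_eq, Rat.cast_eq_zero]; exact hi0
        rcases smul_eq_zero.mp hp with h1 | h1
        · exact absurd h1 (pow_ne_zero m hdi)
        · exact h1
      have hE0 : E = 0 := by
        cases i₀ with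
        | L n =>
            refine kill_int B hLL hLM hLY hYY hMM hMY hC n ?_ E hE2 hbr
            intro hcon
            exact hdeg0 (by simp [deg, hcon])
        | M n =>
            refine kill_int B hLL hLM hLY hYY hMM hMY hC n ?_ E hE2 hbr
            intro hcon
            exact hdeg0 (by simp [deg, hcon])
        | Y k => exact kill_half B hLL hLM hLY hYY hMM hMY hC k E hE2 hbr
        | C => exact absurd rfl hdeg0
      have hfin := hE1 a
      rw [hE0, lie_zero, neg_zero] at hfin
      have hdl : (((deg i₀ : ℚ) : ℂ)) ≠ 0 := by
        simp only [ne_eq, Rat.cast_eq_zero]; exact hdeg0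
      rcases smul_eq_zero.mp hfin with h1 | h1
      · exact absurd h1 (pow_ne_zero m hdl)
      · exact h1
    -- Step 3 : brackets of "good" elements are good
    have key6 : ∀ x a b : V, (∀ z : V, T z a = 0) → (∀ z : V, T z b = 0) →
        T x ⁅a, b⁆ = 0 := by
      intro x a b h1 h2
      have e1 : ∀ z : V, φ ⁅z, a⁆ = ⁅φ z, a⁆ + ⁅z, φ a⁆ := by
        intro z
        have h := h1 z
        rw [hT, sub_sub, sub_eq_zero] at h
        exact h
      have e2 : ∀ z : V, φ ⁅z, b⁆ = ⁅φ z, b⁆ + ⁅z, φ b⁆ := by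
        intro z
        have h := h2 z
        rw [hT, sub_sub, sub_eq_zero] at h
        exact h
      have e1' : ∀ z : V, φ ⁅a, z⁆ = ⁅φ a, z⁆ + ⁅a, φ z⁆ := by
        intro z
        have h := T_anti z a
        rw [h1 z, neg_zero] at h
        rw [hT, sub_sub, sub_eq_zero] at h
        exact h
      rw [hT]
      rw [show ⁅x, ⁅a, b⁆⁆ = ⁅⁅x, a⁆, b⁆ + ⁅a, ⁅x, b⁆⁆ from leibniz_lie x a b]
      rw [map_add, e2 ⁅x, a⁆, e1' ⁅x, b⁆, e1 x, e2 x]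
      rw [show ⁅φ x, ⁅a, b⁆⁆ = ⁅⁅φ x, a⁆, b⁆ + ⁅a, ⁅φ x, b⁆⁆ from leibniz_lie (φ x) a b]
      rw [e2 a, lie_add x ⁅φ a, b⁆ ⁅a, φ b⁆]
      rw [show ⁅x, ⁅φ a, b⁆⁆ = ⁅⁅x, φ a⁆, b⁆ + ⁅φ a, ⁅x, b⁆⁆ from leibniz_lie x (φ a) b]
      rw [show ⁅x, ⁅a, φ b⁆⁆ = ⁅⁅x, a⁆, φ b⁆ + ⁅a, ⁅x, φ b⁆⁆ from leibniz_lie x a (φ b)]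
      simp only [lie_add, add_lie]
      abel
    have degY : ∀ k : ℤ, deg (SVIdx.Y k) ≠ 0 := by
      intro k
      simp only [deg]
      intro hcon
      exact int_ne_int_add_half 0 k (by push_cast at hcon ⊢; linarith)
    -- Step 4 : the three degree-zero basis vectors
    have hLLval : ⁅B (.L (-1)), B (.L 1)⁆ = (2:ℂ) • B (.L 0) := by
      rw [hLL (-1) 1]
      norm_num
    have h00 : ∀ z : V, T z (B (.L 0)) = 0 := by
      intro z
      have hb : B (.L 0) = (2⁻¹ : ℂ) • ⁅B (.L (-1)), B (.L 1)⁆ := by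
        rw [hLLval, smul_smul]
        norm_num
      rw [hb, map_smul, key6 z _ _ (fun z' => Tzero (.L (-1)) (by norm_num [deg]) z')
        (fun z' => Tzero (.L 1) (by norm_num [deg]) z'), smul_zero]
    have hYYval : ⁅B (.Y (-1)), B (.Y 0)⁆ = B (.M 0) := by
      rw [hYY (-1) 0]
      norm_num
    have h0M : ∀ z : V, T z (B (.M 0)) = 0 := by
      intro z
      rw [← hYYval]
      exact key6 z _ _ (fun z' => Tzero (.Y (-1)) (degY (-1)) z')
        (fun z' => Tzero (.Y 0) (degY 0) z')
    have hLL2val : ⁅B (.L (-2)), B (.L 2)⁆ = (4:ℂ) • B (.L 0) + (2⁻¹ : ℂ) • B .C := by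
      rw [hLL (-2) 2]
      norm_num
    have hCb : B .C = (2:ℂ) • ⁅B (.L (-2)), B (.L 2)⁆ - (8:ℂ) • B (.L 0) := by
      rw [hLL2val]
      module
    have h0C : ∀ z : V, T z (B .C) = 0 := by
      intro z
      rw [hCb, map_sub, map_smul, map_smul, h00 z,
        key6 z _ _ (fun z' => Tzero (.L (-2)) (by norm_num [deg]) z')
          (fun z' => Tzero (.L 2) (by norm_num [deg]) z'),
        smul_zero, smul_zero, sub_zero]
    -- Step 5 : conclusion
    intro x y
    have hTx : T x = 0 := by
      refine B.ext fun i => ?_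
      rw [LinearMap.zero_apply]
      cases i with
      | L n =>
          rcases eq_or_ne n 0 with rfl | hn
          · exact h00 x
          · exact Tzero (.L n) (by simp only [deg]; exact_mod_cast hn) x
      | M n =>
          rcases eq_or_ne n 0 with rfl | hn
          · exact h0M x
          · exact Tzero (.M n) (by simp only [deg]; exact_mod_cast hn) x
      | Y k => exact Tzero (.Y k) (degY k) x
      | C => exact h0C x
    have h := LinearMap.congr_fun hTx y
    rw [LinearMap.zero_apply] at h
    have h2 := (hT x y).symm.trans h
    rw [sub_sub, sub_eq_zero] at h2
    exact h2
  · -- easy direction : derivation → N-derivation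
    intro hφ
    intro x
    exact deriv_iterated φ hφ (m + 1) x
end

section
/- Let 𝔰𝔳 be the Schrödinger–Virasoro algebra over ℂ, the Lie algebra with ℂ-basis { L_n, M_n, Y_{n+1/2}, C : n ∈ ℤ } and brackets [L_m, L_n] = (n−m)L_{m+n} + δ_{m+n,0}(n³−n)/12 · C, [L_m, M_n] = n M_{m+n}, [L_m, Y_{n+1/2}] = (n + (1−m)/2) Y_{m+n+1/2}, [Y_{m+1/2}, Y_{n+1/2}] = (n−m) M_{m+n+1}, [M_m, M_n] = 0, [M_m, Y_{n+1/2}] = 0, and [𝔰𝔳, C] = 0. Then 𝔰𝔳 is generated as a Lie algebra by the five elements L_1, L_2, L_{−2}, M_1 and Y_{−1/2}. In particular, 𝔰𝔳 is a finitely generated Lie algebra. -/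
open scoped BigOperators

/-- The Schrödinger–Virasoro algebra `𝔰𝔳` (here: any complex Lie algebra with basis
`{Lₙ, Mₙ, Y_{n+1/2}, C}` satisfying the defining bracket relations of `𝔰𝔳`) is generated, as
a Lie algebra, by the five elements `L₁, L₂, L₋₂, M₁, Y₋₁/₂`; in particular it is a finitely
generated Lie algebra. -/
theorem schrodingerVirasoro_finitely_generated
    (V : Type*) [LieRing V] [LieAlgebra ℂ V] (B : Module.Basis SVIdx ℂ V)
    (hLL : ∀ m n : ℤ, ⁅B (.L m), B (.L n)⁆ =
      ((n : ℂ) - m) • B (.L (m + n)) +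
        (if m + n = 0 then ((n : ℂ) ^ 3 - n) / 12 else 0) • B .C)
    (hLM : ∀ m n : ℤ, ⁅B (.L m), B (.M n)⁆ = (n : ℂ) • B (.M (m + n)))
    (hLY : ∀ m n : ℤ, ⁅B (.L m), B (.Y n)⁆ = ((n : ℂ) + (1 - (m : ℂ)) / 2) • B (.Y (m + n)))
    (hYY : ∀ m n : ℤ, ⁅B (.Y m), B (.Y n)⁆ = ((n : ℂ) - m) • B (.M (m + n + 1)))
    (hMM : ∀ m n : ℤ, ⁅B (.M m), B (.M n)⁆ = 0)
    (hMY : ∀ m n : ℤ, ⁅B (.M m), B (.Y n)⁆ = 0)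
    (hC : ∀ v : V, ⁅v, B .C⁆ = 0)
 :
    LieSubalgebra.lieSpan ℂ V
      {B (.L 1), B (.L 2), B (.L (-2)), B (.M 1), B (.Y (-1))} = ⊤ := by
  set S := LieSubalgebra.lieSpan ℂ V
      {B (.L 1), B (.L 2), B (.L (-2)), B (.M 1), B (.Y (-1))} with hS
  have key : ∀ (c : ℂ) (a b v : V), c ≠ 0 → ⁅a, b⁆ = c • v → a ∈ S → b ∈ S → v ∈ S := by
    intro c a b v hc h ha hb
    have hm := S.lie_mem ha hb
    rw [h] at hm
    have := S.smul_mem c⁻¹ hm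
    rwa [smul_smul, inv_mul_cancel₀ hc, one_smul] at this
  have hL1 : B (.L 1) ∈ S := LieSubalgebra.subset_lieSpan (by simp)
  have hL2 : B (.L 2) ∈ S := LieSubalgebra.subset_lieSpan (by simp)
  have hLm2 : B (.L (-2)) ∈ S := LieSubalgebra.subset_lieSpan (by simp)
  have hM1 : B (.M 1) ∈ S := LieSubalgebra.subset_lieSpan (by simp)
  have hYm1 : B (.Y (-1)) ∈ S := LieSubalgebra.subset_lieSpan (by simp)
  -- L₋₁
  have hLm1 : B (.L (-1)) ∈ S := by
    refine key (-3) _ _ _ (by norm_num) ?_ hL1 hLm2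
    rw [hLL 1 (-2)]; norm_num
  -- L₀
  have hL0 : B (.L 0) ∈ S := by
    refine key (-2) _ _ _ (by norm_num) ?_ hL1 hLm1
    rw [hLL 1 (-1)]; norm_num
  -- C
  have hCm : B .C ∈ S := by
    have hm1 := S.lie_mem hL2 hLm2
    have hbr : ⁅B (.L 2), B (.L (-2))⁆ = (-4 : ℂ) • B (.L 0) + (-(1:ℂ)/2) • B .C := by
      rw [hLL 2 (-2)]; norm_num
    have heq : B .C = (-2 : ℂ) • ⁅B (.L 2), B (.L (-2))⁆ - (8 : ℂ) • B (.L 0) := by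
      rw [hbr]; module
    rw [heq]
    exact sub_mem (S.smul_mem _ hm1) (S.smul_mem _ hL0)
  -- positive L's
  have hLp : ∀ k : ℕ, B (.L ((k : ℤ) + 2)) ∈ S := by
    intro k
    induction k with
    | zero => simpa using hL2
    | succ n ih =>
      have hc : ((n : ℂ) + 1) ≠ 0 := by
        have : ((n : ℂ) + 1) = ((n + 1 : ℕ) : ℂ) := by push_cast; ring
        rw [this]
        exact Nat.cast_ne_zero.mpr (Nat.succ_ne_zero n)
      refine key ((n : ℂ) + 1) _ _ _ hc ?_ hL1 ih
      rw [hLL 1 ((n : ℤ) + 2), show (1 : ℤ) + ((n : ℤ) + 2) = ((n + 1 : ℕ) : ℤ) + 2 by push_cast; ring,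
        if_neg (by omega), zero_smul, add_zero]
      congr 1
      push_cast; ring
  -- negative L's
  have hLn : ∀ k : ℕ, B (.L (-(k : ℤ) - 2)) ∈ S := by
    intro k
    induction k with
    | zero => simpa using hLm2
    | succ n ih =>
      have hc : (-(n : ℂ) - 1) ≠ 0 := by
        intro h0
        have h1 : ((n : ℂ) + 1) = ((n + 1 : ℕ) : ℂ) := by push_cast; ring
        have : ((n + 1 : ℕ) : ℂ) = 0 := by rw [← h1]; linear_combination -h0
        exact Nat.succ_ne_zero n (Nat.cast_eq_zero.mp this)
      refine key (-(n : ℂ) - 1) _ _ _ hc ?_ hLm1 ih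
      rw [hLL (-1) (-(n : ℤ) - 2),
        show (-1 : ℤ) + (-(n : ℤ) - 2) = -((n + 1 : ℕ) : ℤ) - 2 by push_cast; ring,
        if_neg (by omega), zero_smul, add_zero]
      congr 1
      push_cast; ring
  -- all L's
  have hL : ∀ n : ℤ, B (.L n) ∈ S := by
    intro n
    rcases le_or_gt 0 n with h | h
    · rcases lt_or_ge n 2 with h2 | h2
      · interval_cases n
        · exact hL0
        · exact hL1
      · have : n = ((n.toNat - 2 : ℕ) : ℤ) + 2 := by omega
        rw [this]; exact hLp _
    · rcases lt_or_ge (-2 : ℤ) n with h2 | h2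
      · interval_cases n
        exact hLm1
      · have : n = -(((-n).toNat - 2 : ℕ) : ℤ) - 2 := by omega
        rw [this]; exact hLn _
  -- all M's
  have hM : ∀ n : ℤ, B (.M n) ∈ S := by
    intro n
    refine key 1 _ _ _ one_ne_zero ?_ (hL (n - 1)) hM1
    rw [hLM (n - 1) 1, show n - 1 + 1 = n by ring]
    norm_num
  -- Y's with index ≠ -2
  have hY' : ∀ n : ℤ, n ≠ -2 → B (.Y n) ∈ S := by
    intro n hn
    have hc : ((-1 : ℂ) + (1 - ((n : ℂ) + 1)) / 2) ≠ 0 := by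
      intro h0
      have hc2 : (n : ℂ) = -2 := by linear_combination -2 * h0
      have : ((n : ℤ) : ℂ) = ((-2 : ℤ) : ℂ) := by push_cast; exact hc2
      exact hn (Int.cast_injective this)
    refine key ((-1 : ℂ) + (1 - ((n : ℂ) + 1)) / 2) _ _ _ hc ?_ (hL (n + 1)) hYm1
    rw [hLY (n + 1) (-1), show n + 1 + -1 = n by ring]
    congr 1
    push_cast; ring
  -- Y₋₂
  have hYm2 : B (.Y (-2)) ∈ S := by
    refine key (3 / 2) _ _ _ (by norm_num) ?_ (hL (-2)) (hY' 0 (by norm_num))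
    rw [hLY (-2) 0]
    norm_num
  have hY : ∀ n : ℤ, B (.Y n) ∈ S := by
    intro n
    by_cases hn : n = -2
    · rw [hn]; exact hYm2
    · exact hY' n hn
  -- conclude
  rw [eq_top_iff]
  intro v _
  have hv : v ∈ Submodule.span ℂ (Set.range ⇑B) := by
    rw [B.span_eq]; exact Submodule.mem_top
  have hsub : Set.range ⇑B ⊆ (S.toSubmodule : Set V) := by
    rintro _ ⟨i, rfl⟩
    rcases i with n | n | n | _
    · exact hL n
    · exact hM n
    · exact hY n
    · exact hCm
  exact Submodule.span_le.mpr hsub hv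
end
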